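/- arXiv:2505.12825 — 7 statements merged into one kernel-verified Lean document; each statement's English description precedes it below -/
import Mathlib

section
/- There exist constants c > 0 and N ∈ ℕ such that for every odd integer n_1 = 2q + 1 with q ≥ N, every integer n_0 ≥ 2, and every real θ with 1 ≤ θ ≤ c·n_1², the points defined by x_i = i for 1 ≤ i ≤ n_1 and x_{n_1+j} = n_1 + θ + (j − 1) for 1 ≤ j ≤ n_0 satisfy h̄(q + 1) > h̄(n_1 + n_0); that is, the middle clustered anomaly receives a strictly larger expected depth than the rightmost normal point, so a separation of order n_1² is necessary for iForest to detect all marginal clustered anomalies. -/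
open Finset

/-- The closed-form expected iForest depth of the `i`-th of the sorted data points
`x 1 < … < x n`. -/
noncomputable def hbar (x : ℕ → ℝ) (n i : ℕ) : ℝ :=
  ∑ j ∈ Finset.Icc 2 i, (x j - x (j - 1)) / (x i - x (j - 1)) +
    ∑ j ∈ Finset.Icc (i + 1) n, (x j - x (j - 1)) / (x j - x i)

lemma my_sum_inv_le_log (a : ℝ) (ha : 0 < a) (n : ℕ) :
    ∑ k ∈ Finset.range n, 1 / (a + k + 1) ≤ Real.log (a + n) - Real.log a := by
  have h : ∀ k ∈ Finset.range n, 1 / (a + (k : ℝ) + 1) ≤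
      Real.log (a + ((k + 1 : ℕ) : ℝ)) - Real.log (a + (k : ℝ)) := by
    intro k _
    have h1 : (0:ℝ) < a + k := by positivity
    have h2 : (0:ℝ) < a + k + 1 := by positivity
    have h3 := Real.log_le_sub_one_of_pos (div_pos h1 h2)
    rw [Real.log_div h1.ne' h2.ne'] at h3
    have h4 : (a + k) / (a + k + 1) - 1 = -(1 / (a + k + 1)) := by field_simp; ring
    rw [h4] at h3
    push_cast
    rw [show a + ((k : ℝ) + 1) = a + k + 1 by ring]
    linarith
  calc ∑ k ∈ Finset.range n, 1 / (a + k + 1)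
      ≤ ∑ k ∈ Finset.range n,
          (Real.log (a + ((k + 1 : ℕ) : ℝ)) - Real.log (a + (k : ℝ))) :=
        Finset.sum_le_sum h
    _ = Real.log (a + n) - Real.log a := by
        rw [Finset.sum_range_sub (fun k : ℕ => Real.log (a + (k : ℝ)))]
        norm_num

lemma my_log_le_sum_inv (a : ℝ) (ha : 0 < a) (n : ℕ) :
    Real.log (a + n) - Real.log a ≤ ∑ k ∈ Finset.range n, 1 / (a + k) := by
  have h : ∀ k ∈ Finset.range n,
      Real.log (a + ((k + 1 : ℕ) : ℝ)) - Real.log (a + (k : ℝ)) ≤ 1 / (a + (k : ℝ)) := by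
    intro k _
    have h1 : (0:ℝ) < a + k := by positivity
    have h2 : (0:ℝ) < a + k + 1 := by positivity
    have h3 := Real.log_le_sub_one_of_pos (div_pos h2 h1)
    rw [Real.log_div h2.ne' h1.ne'] at h3
    have h4 : (a + k + 1) / (a + k) - 1 = 1 / (a + k) := by field_simp; ring
    rw [h4] at h3
    push_cast
    rw [show a + ((k : ℝ) + 1) = a + k + 1 by ring]
    linarith
  calc Real.log (a + n) - Real.log a
      = ∑ k ∈ Finset.range n,
          (Real.log (a + ((k + 1 : ℕ) : ℝ)) - Real.log (a + (k : ℝ))) := by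
        rw [Finset.sum_range_sub (fun k : ℕ => Real.log (a + (k : ℝ)))]
        norm_num
    _ ≤ ∑ k ∈ Finset.range n, 1 / (a + k) := Finset.sum_le_sum h


set_option maxHeartbeats 1600000 in
/-- **Necessity of an `n₁²` separation for iForest to detect all marginal clustered
anomalies.** There are constants `c > 0` and `N ∈ ℕ` such that for every odd
`n₁ = 2q + 1` with `q ≥ N`, every `n₀ ≥ 2` and every `1 ≤ θ ≤ c·n₁²`, the points
`x i = i` for `1 ≤ i ≤ n₁` and `x (n₁ + j) = n₁ + θ + (j − 1)` for `1 ≤ j ≤ n₀`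
satisfy `h̄(q + 1) > h̄(n₁ + n₀)`: the middle clustered anomaly has strictly larger
expected depth than the rightmost normal point. -/
theorem iforest_marginal_clustered_separation_necessary :
    ∃ c : ℝ, ∃ N : ℕ, 0 < c ∧
      ∀ q : ℕ, N ≤ q →
      ∀ n₀ : ℕ, 2 ≤ n₀ →
      ∀ θ : ℝ, 1 ≤ θ → θ ≤ c * ((2 * q + 1 : ℕ) : ℝ) ^ 2 →
      hbar
          (fun i => if i ≤ 2 * q + 1 then (i : ℝ)
            else ((2 * q + 1 : ℕ) : ℝ) + θ + ((i : ℝ) - ((2 * q + 1 : ℕ) : ℝ) - 1))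
          (2 * q + 1 + n₀) (2 * q + 1 + n₀)
        < hbar
          (fun i => if i ≤ 2 * q + 1 then (i : ℝ)
            else ((2 * q + 1 : ℕ) : ℝ) + θ + ((i : ℝ) - ((2 * q + 1 : ℕ) : ℝ) - 1))
          (2 * q + 1 + n₀) (q + 1) := by
  refine ⟨1/10000, 10000, by norm_num, ?_⟩
  intro q hq n₀ hn₀ θ hθ1 hθ2
  set x : ℕ → ℝ := fun i => if i ≤ 2 * q + 1 then (i : ℝ)
      else ((2 * q + 1 : ℕ) : ℝ) + θ + ((i : ℝ) - ((2 * q + 1 : ℕ) : ℝ) - 1) with hxdef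
  set A : ℝ := θ + (n₀ : ℝ) - 1 with hA
  set M : ℝ := (q : ℝ) + θ with hM
  have hx_le : ∀ j : ℕ, j ≤ 2 * q + 1 → x j = (j : ℝ) := by
    intro j hj; simp [hxdef, if_pos hj]
  have hx_gt : ∀ j : ℕ, 2 * q + 1 < j →
      x j = (2 * q + 1 : ℝ) + θ + ((j : ℝ) - (2 * q + 1 : ℝ) - 1) := by
    intro j hj
    simp only [hxdef, if_neg (by omega : ¬ j ≤ 2 * q + 1)]
    push_cast
    ring
  have hq' : (10000 : ℝ) ≤ (q : ℝ) := by exact_mod_cast hq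
  have hn₀' : (2 : ℝ) ≤ (n₀ : ℝ) := by exact_mod_cast hn₀
  -- closed form for the rightmost normal point
  have E1 : hbar x (2 * q + 1 + n₀) (2 * q + 1 + n₀) =
      (∑ k ∈ Finset.range (2 * q), 1 / (A + (k : ℝ) + 1)) + θ / A
        + ∑ m ∈ Finset.range (n₀ - 1), 1 / ((m : ℝ) + 1) := by
    unfold hbar
    rw [Finset.Icc_eq_empty (show ¬ 2 * q + 1 + n₀ + 1 ≤ 2 * q + 1 + n₀ from by omega), Finset.sum_empty, add_zero]
    rw [← Finset.Ico_add_one_right_eq_Icc]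
    rw [← Finset.sum_Ico_consecutive _ (show 2 ≤ 2 * q + 2 by omega)
        (show 2 * q + 2 ≤ 2 * q + 1 + n₀ + 1 by omega)]
    rw [← Finset.sum_Ico_consecutive _ (show 2 * q + 2 ≤ 2 * q + 3 by omega)
        (show 2 * q + 3 ≤ 2 * q + 1 + n₀ + 1 by omega)]
    have HS1 : ∑ j ∈ Finset.Ico 2 (2 * q + 2),
        (x j - x (j - 1)) / (x (2 * q + 1 + n₀) - x (j - 1)) =
        ∑ k ∈ Finset.range (2 * q), 1 / (A + (k : ℝ) + 1) := by
      rw [Finset.sum_Ico_eq_sum_range]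
      simp only [show 2 * q + 2 - 2 = 2 * q from by omega]
      conv_rhs => rw [← Finset.sum_range_reflect]
      apply Finset.sum_congr rfl
      intro i hi
      simp only [Finset.mem_range] at hi
      rw [show 2 + i - 1 = i + 1 from by omega]
      rw [hx_le _ (by omega), hx_le _ (by omega), hx_gt _ (by omega)]
      have hc : ((2 * q - 1 - i : ℕ) : ℝ) = 2 * (q : ℝ) - 1 - i := by
        have h : (2 * q - 1 - i) + (i + 1) = 2 * q := by omega
        have := congrArg (fun t : ℕ => (t : ℝ)) h
        push_cast at this
        linarith
      rw [hc]
      rw [hA]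
      congr 1
      · push_cast; ring
      · push_cast; ring
    have HS2 : ∑ j ∈ Finset.Ico (2 * q + 2) (2 * q + 3),
        (x j - x (j - 1)) / (x (2 * q + 1 + n₀) - x (j - 1)) = θ / A := by
      rw [show 2 * q + 3 = (2 * q + 2) + 1 from rfl, Nat.Ico_succ_singleton,
        Finset.sum_singleton]
      rw [show 2 * q + 2 - 1 = 2 * q + 1 from by omega]
      rw [hx_gt _ (by omega), hx_le _ (by omega), hx_gt _ (by omega)]
      rw [hA]
      congr 1
      · push_cast; ring
      · push_cast; ring
    have HS3 : ∑ j ∈ Finset.Ico (2 * q + 3) (2 * q + 1 + n₀ + 1),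
        (x j - x (j - 1)) / (x (2 * q + 1 + n₀) - x (j - 1)) =
        ∑ m ∈ Finset.range (n₀ - 1), 1 / ((m : ℝ) + 1) := by
      rw [Finset.sum_Ico_eq_sum_range]
      simp only [show 2 * q + 1 + n₀ + 1 - (2 * q + 3) = n₀ - 1 from by omega]
      conv_rhs => rw [← Finset.sum_range_reflect]
      apply Finset.sum_congr rfl
      intro i hi
      simp only [Finset.mem_range] at hi
      rw [show 2 * q + 3 + i - 1 = 2 * q + 2 + i from by omega]
      rw [hx_gt _ (by omega), hx_gt _ (by omega), hx_gt _ (by omega)]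
      have hc : ((n₀ - 1 - 1 - i : ℕ) : ℝ) = (n₀ : ℝ) - 2 - i := by
        have h : (n₀ - 1 - 1 - i) + (i + 2) = n₀ := by omega
        have := congrArg (fun t : ℕ => (t : ℝ)) h
        push_cast at this
        linarith
      rw [hc]
      congr 1
      · push_cast; ring
      · push_cast; ring
    rw [HS1, HS2, HS3]
    ring
  -- closed form for the middle anomaly
  have E2 : hbar x (2 * q + 1 + n₀) (q + 1) =
      (∑ k ∈ Finset.range q, 1 / ((k : ℝ) + 1))
        + ((∑ k ∈ Finset.range q, 1 / ((k : ℝ) + 1))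
          + (θ / M + ∑ m ∈ Finset.range (n₀ - 1), 1 / (M + (m : ℝ) + 1))) := by
    unfold hbar
    rw [← Finset.Ico_add_one_right_eq_Icc, ← Finset.Ico_add_one_right_eq_Icc]
    rw [← Finset.sum_Ico_consecutive _ (show q + 1 + 1 ≤ 2 * q + 2 by omega)
        (show 2 * q + 2 ≤ 2 * q + 1 + n₀ + 1 by omega)]
    rw [← Finset.sum_Ico_consecutive _ (show 2 * q + 2 ≤ 2 * q + 3 by omega)
        (show 2 * q + 3 ≤ 2 * q + 1 + n₀ + 1 by omega)]
    have HT1 : ∑ j ∈ Finset.Ico 2 (q + 1 + 1),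
        (x j - x (j - 1)) / (x (q + 1) - x (j - 1)) =
        ∑ k ∈ Finset.range q, 1 / ((k : ℝ) + 1) := by
      rw [Finset.sum_Ico_eq_sum_range]
      simp only [show q + 1 + 1 - 2 = q from by omega]
      conv_rhs => rw [← Finset.sum_range_reflect]
      apply Finset.sum_congr rfl
      intro i hi
      simp only [Finset.mem_range] at hi
      rw [show 2 + i - 1 = i + 1 from by omega]
      rw [hx_le _ (by omega), hx_le _ (by omega), hx_le _ (by omega)]
      have hc : ((q - 1 - i : ℕ) : ℝ) = (q : ℝ) - 1 - i := by
        have h : (q - 1 - i) + (i + 1) = q := by omega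
        have := congrArg (fun t : ℕ => (t : ℝ)) h
        push_cast at this
        linarith
      rw [hc]
      congr 1
      · push_cast; ring
      · push_cast; ring
    have HT2 : ∑ j ∈ Finset.Ico (q + 1 + 1) (2 * q + 2),
        (x j - x (j - 1)) / (x j - x (q + 1)) =
        ∑ k ∈ Finset.range q, 1 / ((k : ℝ) + 1) := by
      rw [Finset.sum_Ico_eq_sum_range]
      simp only [show 2 * q + 2 - (q + 1 + 1) = q from by omega]
      apply Finset.sum_congr rfl
      intro i hi
      simp only [Finset.mem_range] at hi
      rw [show q + 1 + 1 + i - 1 = q + 1 + i from by omega]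
      rw [hx_le _ (by omega), hx_le _ (by omega), hx_le _ (by omega)]
      congr 1
      · push_cast; ring
      · push_cast; ring
    have HT3 : ∑ j ∈ Finset.Ico (2 * q + 2) (2 * q + 3),
        (x j - x (j - 1)) / (x j - x (q + 1)) = θ / M := by
      rw [show 2 * q + 3 = (2 * q + 2) + 1 from rfl, Nat.Ico_succ_singleton,
        Finset.sum_singleton]
      rw [show 2 * q + 2 - 1 = 2 * q + 1 from by omega]
      rw [hx_gt _ (by omega), hx_le _ (by omega), hx_le _ (by omega)]
      rw [hM]
      congr 1
      · push_cast; ring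
      · push_cast; ring
    have HT4 : ∑ j ∈ Finset.Ico (2 * q + 3) (2 * q + 1 + n₀ + 1),
        (x j - x (j - 1)) / (x j - x (q + 1)) =
        ∑ m ∈ Finset.range (n₀ - 1), 1 / (M + (m : ℝ) + 1) := by
      rw [Finset.sum_Ico_eq_sum_range]
      simp only [show 2 * q + 1 + n₀ + 1 - (2 * q + 3) = n₀ - 1 from by omega]
      apply Finset.sum_congr rfl
      intro i hi
      simp only [Finset.mem_range] at hi
      rw [show 2 * q + 3 + i - 1 = 2 * q + 2 + i from by omega]
      rw [hx_gt _ (by omega), hx_gt _ (by omega), hx_le _ (by omega)]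
      rw [hM]
      congr 1
      · push_cast; ring
      · push_cast; ring
    rw [HT1, HT2, HT3, HT4]
  rw [E1, E2]
  push_cast at hθ2
  have hApos : (0:ℝ) < A := by rw [hA]; linarith
  have hA2 : (2:ℝ) ≤ A := by rw [hA]; linarith
  have hMpos : (0:ℝ) < M := by rw [hM]; linarith
  have hθM : 0 ≤ θ / M := div_nonneg (by linarith) hMpos.le
  have hcast1 : ((n₀ - 1 : ℕ) : ℝ) = (n₀ : ℝ) - 1 := by
    have h : (n₀ - 1) + 1 = n₀ := by omega
    have := congrArg (fun t : ℕ => (t : ℝ)) h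
    push_cast at this
    linarith
  have hcast2 : ((n₀ - 2 : ℕ) : ℝ) = (n₀ : ℝ) - 2 := by
    have h : (n₀ - 2) + 2 = n₀ := by omega
    have := congrArg (fun t : ℕ => (t : ℝ)) h
    push_cast at this
    linarith
  have hT2b : ∑ k ∈ Finset.range (2 * q), 1 / (A + (k : ℝ) + 1)
      ≤ Real.log (A + 2 * (q : ℝ)) - Real.log A := by
    have h := my_sum_inv_le_log A hApos (2 * q)
    push_cast at h
    exact h
  have hθA : θ / A ≤ 1 := by
    rw [div_le_one hApos, hA]; linarith
  have hHn₀ : ∑ m ∈ Finset.range (n₀ - 1), 1 / ((m : ℝ) + 1)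
      ≤ 1 + Real.log ((n₀ : ℝ) - 1) := by
    have h := my_sum_inv_le_log 1 one_pos (n₀ - 2)
    rw [Real.log_one, sub_zero, hcast2] at h
    rw [show (1 : ℝ) + ((n₀ : ℝ) - 2) = (n₀ : ℝ) - 1 by ring] at h
    have hsplit : ∑ m ∈ Finset.range (n₀ - 1), 1 / ((m : ℝ) + 1)
        = 1 + ∑ k ∈ Finset.range (n₀ - 2), 1 / (1 + (k : ℝ) + 1) := by
      rw [show n₀ - 1 = (n₀ - 2) + 1 from by omega, Finset.sum_range_succ']
      have he : ∑ k ∈ Finset.range (n₀ - 2), 1 / (((k + 1 : ℕ) : ℝ) + 1)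
          = ∑ k ∈ Finset.range (n₀ - 2), 1 / (1 + (k : ℝ) + 1) :=
        Finset.sum_congr rfl fun k _ => by push_cast; ring_nf
      rw [he]
      norm_num
      ring
    rw [hsplit]
    linarith
  have hHq : Real.log ((q : ℝ) + 1) ≤ ∑ k ∈ Finset.range q, 1 / ((k : ℝ) + 1) := by
    have h := my_log_le_sum_inv 1 one_pos q
    rw [Real.log_one, sub_zero] at h
    have he : ∑ k ∈ Finset.range q, 1 / (1 + (k : ℝ))
        = ∑ k ∈ Finset.range q, 1 / ((k : ℝ) + 1) :=
      Finset.sum_congr rfl fun k _ => by ring_nf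
    rw [he, show (1 : ℝ) + (q : ℝ) = (q : ℝ) + 1 by ring] at h
    exact h
  have hS : Real.log (M + (n₀ : ℝ)) - Real.log (M + 1)
      ≤ ∑ m ∈ Finset.range (n₀ - 1), 1 / (M + (m : ℝ) + 1) := by
    have h := my_log_le_sum_inv (M + 1) (by positivity) (n₀ - 1)
    have he : ∑ k ∈ Finset.range (n₀ - 1), 1 / (M + 1 + (k : ℝ))
        = ∑ m ∈ Finset.range (n₀ - 1), 1 / (M + (m : ℝ) + 1) :=
      Finset.sum_congr rfl fun k _ => by ring_nf
    rw [he, hcast1, show M + 1 + ((n₀ : ℝ) - 1) = M + (n₀ : ℝ) by ring] at h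
    exact h
  have hexp2 : Real.exp 2 < 7.4 := by
    have h := Real.exp_one_lt_d9
    have h2 : Real.exp 2 = Real.exp 1 * Real.exp 1 := by
      rw [← Real.exp_add]; norm_num
    nlinarith [Real.exp_pos 1]
  have hn₁pos : (0:ℝ) < (n₀ : ℝ) - 1 := by linarith
  rcases le_or_gt (q : ℝ) A with hc1 | hc1
  · -- A ≥ q
    have k1 : Real.log (A + 2 * (q : ℝ)) ≤ Real.log 3 + Real.log A := by
      rw [← Real.log_mul (by norm_num) hApos.ne']
      exact Real.log_le_log (by linarith) (by linarith)
    have k2 : Real.log ((n₀ : ℝ) - 1) ≤ Real.log (M + (n₀ : ℝ)) :=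
      Real.log_le_log hn₁pos (by linarith)
    have hM1 : (0:ℝ) < M + 1 := by linarith
    have hb : M + 1 ≤ 5 / 10000 * ((q : ℝ) + 1) ^ 2 := by
      rw [hM]
      nlinarith [hq']
    have key : 3 * (M + 1) * Real.exp 2 < ((q : ℝ) + 1) ^ 2 := by
      nlinarith [hb, hexp2, Real.exp_pos 2, hM1, sq_nonneg ((q : ℝ) + 1)]
    have k3 : Real.log 3 + 2 + Real.log (M + 1) < 2 * Real.log ((q : ℝ) + 1) := by
      calc Real.log 3 + 2 + Real.log (M + 1)
          = Real.log (3 * (M + 1) * Real.exp 2) := by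
            rw [Real.log_mul (by positivity) (Real.exp_ne_zero 2),
              Real.log_mul (by norm_num) hM1.ne', Real.log_exp]
            ring
        _ < Real.log (((q : ℝ) + 1) ^ 2) := Real.log_lt_log (by positivity) key
        _ = 2 * Real.log ((q : ℝ) + 1) := by
            rw [Real.log_pow]; norm_num
    linarith [hT2b, hθA, hHn₀, hHq, hS, hθM, k1, k2, k3]
  · -- A < q
    have hSnn : 0 ≤ ∑ m ∈ Finset.range (n₀ - 1), 1 / (M + (m : ℝ) + 1) :=
      Finset.sum_nonneg fun m _ => by positivity
    have k1 : Real.log (A + 2 * (q : ℝ)) ≤ Real.log (3 * (q : ℝ)) :=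
      Real.log_le_log (by linarith) (by linarith)
    have k2 : Real.log ((n₀ : ℝ) - 1) ≤ Real.log A :=
      Real.log_le_log hn₁pos (by rw [hA]; linarith)
    have key : 3 * (q : ℝ) * Real.exp 2 < ((q : ℝ) + 1) ^ 2 := by
      nlinarith [hq', hexp2, Real.exp_pos 2]
    have k3 : Real.log (3 * (q : ℝ)) + 2 < 2 * Real.log ((q : ℝ) + 1) := by
      calc Real.log (3 * (q : ℝ)) + 2
          = Real.log (3 * (q : ℝ) * Real.exp 2) := by
            rw [Real.log_mul (by positivity) (Real.exp_ne_zero 2), Real.log_exp]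
        _ < Real.log (((q : ℝ) + 1) ^ 2) := Real.log_lt_log (by positivity) key
        _ = 2 * Real.log ((q : ℝ) + 1) := by
            rw [Real.log_pow]; norm_num
    linarith [hT2b, hθA, hHn₀, hHq, hθM, hSnn, k1, k2, k3]
end

section
/- Let n_1 ≥ 1 and k be integers with k ≥ n_1 + 3, let n_0 ≥ k + 1, n = n_1 + n_0, and let x_1 < … < x_n be real numbers whose adjacent gaps within x_1, …, x_{n_1} and within x_{n_1+1}, …, x_n all lie in [L, U] (0 < L ≤ U), with θ = x_{n_1+1} − x_{n_1} ≥ U. If (k − n_1 − 2)·θ + (k − n_1 − 2)(k − n_1 − 3)·L/2 > k·(k + 1)·U/2, then min_{1 ≤ j ≤ n_1} h_knn(j) > max_{n_1+1 ≤ j ≤ n} h_knn(j); that is, the k-NN detector detects all the marginal clustered anomalies. -/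
open Finset

/-- `S` is a set of `k` nearest neighbors of the `i`-th point among `x 1, …, x n`. -/
def IsKNN (x : ℕ → ℝ) (n k i : ℕ) (S : Finset ℕ) : Prop :=
  S ⊆ (Finset.Icc 1 n).erase i ∧ S.card = k ∧
    ∀ a ∈ S, ∀ b ∈ (Finset.Icc 1 n).erase i, b ∉ S → |x i - x a| ≤ |x i - x b|

/-- The `k`-NN anomaly score of the `i`-th point with neighbor set `S`. -/
noncomputable def knnScore (x : ℕ → ℝ) (k i : ℕ) (S : Finset ℕ) : ℝ :=
  (1 / (k : ℝ)) * ∑ a ∈ S, |x i - x a|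

/-- Sum of a finset of naturals is at least the triangular number (real form). -/
lemma knnAux.tri_le_sum (t : Finset ℕ) :
    (t.card : ℝ) * ((t.card : ℝ) - 1) / 2 ≤ ∑ b ∈ t, (b : ℝ) := by
  induction t using Finset.strongInduction with
  | _ t ih =>
    rcases t.eq_empty_or_nonempty with rfl | ht
    · simp
    · set m := t.max' ht with hmdef
      have hm : m ∈ t := t.max'_mem ht
      have hsub : t ⊆ Finset.Iic m := fun a ha => Finset.mem_Iic.mpr (t.le_max' a ha)
      have hcard : t.card ≤ m + 1 := by
        have := Finset.card_le_card hsub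
        simpa using this
      have ihe := ih (t.erase m) (Finset.erase_ssubset hm)
      have hce : (t.erase m).card = t.card - 1 := Finset.card_erase_of_mem hm
      have hpos : 1 ≤ t.card := Finset.card_pos.mpr ht
      have hcast : ((t.erase m).card : ℝ) = (t.card : ℝ) - 1 := by
        rw [hce]; push_cast [hpos]; ring
      have hsum : ∑ b ∈ t, (b : ℝ) = (m : ℝ) + ∑ b ∈ t.erase m, (b : ℝ) :=
        (Finset.add_sum_erase _ _ hm).symm
      rw [hsum]
      rw [hcast] at ihe
      have hmge : (t.card : ℝ) - 1 ≤ (m : ℝ) := by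
        have : (t.card : ℝ) ≤ (m : ℝ) + 1 := by exact_mod_cast hcard
        linarith
      nlinarith [ihe]

/-- Sum over a finset with all elements ≥ m. -/
lemma knnAux.sum_ge_shift (s : Finset ℕ) (m : ℕ) (hs : ∀ a ∈ s, m ≤ a) :
    (s.card : ℝ) * m + (s.card : ℝ) * ((s.card : ℝ) - 1) / 2 ≤ ∑ a ∈ s, (a : ℝ) := by
  have hinj : Set.InjOn (· - m) s := by
    intro a ha b hb hab
    have := hs a ha; have := hs b hb
    simp only at hab; omega
  have hcard : (s.image (· - m)).card = s.card := Finset.card_image_of_injOn hinj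
  have hsum : ∑ b ∈ s.image (· - m), (b : ℝ) = ∑ a ∈ s, ((a - m : ℕ) : ℝ) :=
    Finset.sum_image (fun a ha b hb hab => hinj ha hb hab)
  have h1 : ∑ a ∈ s, ((a - m : ℕ) : ℝ) = ∑ a ∈ s, ((a : ℝ) - m) := by
    apply Finset.sum_congr rfl
    intro a ha
    have := hs a ha
    push_cast [Nat.cast_sub this]
    ring
  have h2 := knnAux.tri_le_sum (s.image (· - m))
  rw [hcard, hsum, h1, Finset.sum_sub_distrib, Finset.sum_const] at h2
  simp only [nsmul_eq_mul] at h2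
  linarith

/-- Exchange lemma: a k-NN set minimizes the sum of distances among k-subsets of the pool. -/
lemma knnAux.knn_sum_le (d : ℕ → ℝ) (pool S T : Finset ℕ)
    (hT : T ⊆ pool) (hcard : T.card = S.card)
    (hmin : ∀ a ∈ S, ∀ b ∈ pool, b ∉ S → d a ≤ d b) :
    ∑ a ∈ S, d a ≤ ∑ a ∈ T, d a := by
  have hsplitS : ∑ a ∈ S ∩ T, d a + ∑ a ∈ S \ T, d a = ∑ a ∈ S, d a :=
    Finset.sum_inter_add_sum_sdiff S T d
  have hsplitT : ∑ a ∈ T ∩ S, d a + ∑ a ∈ T \ S, d a = ∑ a ∈ T, d a :=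
    Finset.sum_inter_add_sum_sdiff T S d
  have hc : (S \ T).card = (T \ S).card := by
    have h1 : (S ∩ T).card + (S \ T).card = S.card := Finset.card_inter_add_card_sdiff S T
    have h2 : (T ∩ S).card + (T \ S).card = T.card := Finset.card_inter_add_card_sdiff T S
    rw [Finset.inter_comm] at h2
    omega
  have hinter : ∑ a ∈ S ∩ T, d a = ∑ a ∈ T ∩ S, d a := by rw [Finset.inter_comm]
  have key : ∑ a ∈ S \ T, d a ≤ ∑ a ∈ T \ S, d a := by
    rcases (T \ S).eq_empty_or_nonempty with he | hne
    · have : (S \ T) = ∅ := Finset.card_eq_zero.mp (by rw [hc, he]; simp)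
      simp [this, he]
    · obtain ⟨b₀, hb₀, hb₀min⟩ := Finset.exists_min_image (T \ S) d hne
      have hb₀pool : b₀ ∈ pool := hT (Finset.mem_sdiff.mp hb₀).1
      have hb₀nS : b₀ ∉ S := (Finset.mem_sdiff.mp hb₀).2
      calc ∑ a ∈ S \ T, d a ≤ (S \ T).card • d b₀ := by
            apply Finset.sum_le_card_nsmul
            intro a ha
            exact hmin a (Finset.mem_sdiff.mp ha).1 b₀ hb₀pool hb₀nS
        _ = (T \ S).card • d b₀ := by rw [hc]
        _ ≤ ∑ a ∈ T \ S, d a := Finset.card_nsmul_le_sum _ _ _ (fun a ha => hb₀min a ha)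
  linarith

lemma knnAux.sum_range_cast (a : ℕ) :
    ∑ i ∈ Finset.range a, (i : ℝ) = (a : ℝ) * ((a : ℝ) - 1) / 2 := by
  induction a with
  | zero => simp
  | succ m ih =>
    rw [Finset.sum_range_succ, ih]
    push_cast
    ring

lemma knnAux.sum_Icc_one (N : ℕ) :
    ∑ m ∈ Finset.Icc 1 N, (m : ℝ) = (N : ℝ) * ((N : ℝ) + 1) / 2 := by
  induction N with
  | zero => simp
  | succ m ih =>
    rw [Finset.sum_Icc_succ_top (by omega), ih]
    push_cast
    ring

lemma knnAux.sum_Ico_rev (c d : ℕ) (h : c ≤ d) :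
    ∑ t ∈ Finset.Ico c d, ((d : ℝ) - t)
      = ((d - c : ℕ) : ℝ) * (((d - c : ℕ) : ℝ) + 1) / 2 := by
  rw [← knnAux.sum_Icc_one (d - c)]
  apply Finset.sum_nbij' (i := fun t => d - t) (j := fun m => d - m)
  · intro t ht; rw [Finset.mem_Ico] at ht; rw [Finset.mem_Icc]; omega
  · intro m hm; rw [Finset.mem_Icc] at hm; rw [Finset.mem_Ico]; omega
  · intro t ht; rw [Finset.mem_Ico] at ht; omega
  · intro m hm; rw [Finset.mem_Icc] at hm; omega
  · intro t ht; rw [Finset.mem_Ico] at ht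
    push_cast [Nat.cast_sub (by omega : t ≤ d)]
    ring

lemma knnAux.sum_Ioc_rev (c d : ℕ) (h : c ≤ d) :
    ∑ t ∈ Finset.Ioc c d, ((t : ℝ) - c)
      = ((d - c : ℕ) : ℝ) * (((d - c : ℕ) : ℝ) + 1) / 2 := by
  rw [← knnAux.sum_Icc_one (d - c)]
  apply Finset.sum_nbij' (i := fun t => t - c) (j := fun m => m + c)
  · intro t ht; rw [Finset.mem_Ioc] at ht; rw [Finset.mem_Icc]; omega
  · intro m hm; rw [Finset.mem_Icc] at hm; rw [Finset.mem_Ioc]; omega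
  · intro t ht; rw [Finset.mem_Ioc] at ht; omega
  · intro m hm; rw [Finset.mem_Icc] at hm; omega
  · intro t ht; rw [Finset.mem_Ioc] at ht
    push_cast [Nat.cast_sub (by omega : c ≤ t)]
    ring

set_option maxHeartbeats 1000000 in
/-- **`k`-NN detects all marginal clustered anomalies (sufficiency).**
Let `n₁ ≥ 1`, `k ≥ n₁ + 3`, `n₀ ≥ k + 1`, `n = n₁ + n₀`, and `x 1 < … < x n` with all
adjacent gaps within `x 1, …, x n₁` and within `x (n₁+1), …, x n` in `[L, U]`
(`0 < L ≤ U`), and `θ = x (n₁+1) − x n₁ ≥ U`. If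
`(k − n₁ − 2)·θ + (k − n₁ − 2)(k − n₁ − 3)·L/2 > k(k + 1)·U/2`, then every anomaly
scores strictly higher than every normal point. -/
theorem knn_detects_marginal_clustered_anomalies
    (n₁ k n₀ : ℕ) (hn₁ : 1 ≤ n₁) (hk : n₁ + 3 ≤ k) (hn₀ : k + 1 ≤ n₀)
    (x : ℕ → ℝ) (hx : ∀ i, 1 ≤ i → i < n₁ + n₀ → x i < x (i + 1))
    (L U : ℝ) (hL : 0 < L) (hLU : L ≤ U)
    (hgaps1 : ∀ i, 1 ≤ i → i ≤ n₁ - 1 → L ≤ x (i + 1) - x i ∧ x (i + 1) - x i ≤ U)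
    (hgaps2 : ∀ i, n₁ + 1 ≤ i → i ≤ n₁ + n₀ - 1 →
      L ≤ x (i + 1) - x i ∧ x (i + 1) - x i ≤ U)
    (hθU : U ≤ x (n₁ + 1) - x n₁)
    (hcond : ((k : ℝ) - n₁ - 2) * (x (n₁ + 1) - x n₁)
        + ((k : ℝ) - n₁ - 2) * ((k : ℝ) - n₁ - 3) * L / 2
        > (k : ℝ) * ((k : ℝ) + 1) * U / 2) :
    ∀ j j', 1 ≤ j → j ≤ n₁ → n₁ + 1 ≤ j' → j' ≤ n₁ + n₀ →
      ∀ Sj Sj' : Finset ℕ,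
        IsKNN x (n₁ + n₀) k j Sj → IsKNN x (n₁ + n₀) k j' Sj' →
        knnScore x k j' Sj' < knnScore x k j Sj := by
  intro j j' hj1 hjn₁ hj'1 hj'n Sj Sj' hSj hSj'
  set n := n₁ + n₀ with hn
  obtain ⟨hSjsub, hSjcard, hSjmin⟩ := hSj
  obtain ⟨hSj'sub, hSj'card, hSj'min⟩ := hSj'
  have hkpos : (0 : ℝ) < k := by
    have : 4 ≤ k := by omega
    exact_mod_cast Nat.lt_of_lt_of_le (by norm_num) this
  -- monotonicity
  have hmono : ∀ i jj, 1 ≤ i → i ≤ jj → jj ≤ n → x i ≤ x jj := by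
    intro i jj hi hij
    induction jj, hij using Nat.le_induction with
    | base => exact fun _ => le_refl _
    | succ m hm ih =>
      intro hmn
      have h1 := hx m (le_trans hi hm) (by omega)
      have h2 := ih (by omega)
      linarith
  -- lower bound on gaps in the normal cluster
  have hlow2 : ∀ i jj, n₁ + 1 ≤ i → i ≤ jj → jj ≤ n → ((jj : ℝ) - i) * L ≤ x jj - x i := by
    intro i jj hi hij
    induction jj, hij using Nat.le_induction with
    | base => intro _; simp
    | succ m hm ih =>
      intro hmn
      have h1 := (hgaps2 m (le_trans hi hm) (by omega)).1
      have h2 := ih (by omega)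
      push_cast at h2 ⊢
      linarith
  -- upper bound on gaps in the normal cluster
  have hup2 : ∀ i jj, n₁ + 1 ≤ i → i ≤ jj → jj ≤ n → x jj - x i ≤ ((jj : ℝ) - i) * U := by
    intro i jj hi hij
    induction jj, hij using Nat.le_induction with
    | base => intro _; simp
    | succ m hm ih =>
      intro hmn
      have h1 := (hgaps2 m (le_trans hi hm) (by omega)).2
      have h2 := ih (by omega)
      push_cast at h2 ⊢
      linarith
  set θ := x (n₁ + 1) - x n₁ with hθdef
  -- distance from the anomaly j to a normal point a
  have hdist : ∀ a, n₁ + 1 ≤ a → a ≤ n → θ + ((a : ℝ) - n₁ - 1) * L ≤ x a - x j := by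
    intro a ha han
    have h1 := hlow2 (n₁ + 1) a (le_refl _) ha han
    have h2 := hmono j n₁ hj1 hjn₁ (by omega)
    push_cast at h1 ⊢
    linarith
  -- STEP 1 : lower bound on the anomaly's score sum
  have hlowsum : (k : ℝ) * ((k : ℝ) + 1) * U / 2 < ∑ a ∈ Sj, |x j - x a| := by
    set S₂ := Sj.filter (fun a => n₁ + 1 ≤ a) with hS₂def
    have hmemS₂ : ∀ a ∈ S₂, n₁ + 1 ≤ a ∧ a ≤ n := by
      intro a ha
      have h1 := Finset.mem_filter.mp ha
      have h2 := hSjsub h1.1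
      rw [Finset.mem_erase, Finset.mem_Icc] at h2
      exact ⟨h1.2, h2.2.2⟩
    -- cardinality of S₂
    have hcS₂ : k + 1 ≤ S₂.card + n₁ := by
      have hfsub : Sj.filter (fun a => ¬ (n₁ + 1 ≤ a)) ⊆ (Finset.Icc 1 n₁).erase j := by
        intro a ha
        have h1 := Finset.mem_filter.mp ha
        have h2 := hSjsub h1.1
        rw [Finset.mem_erase, Finset.mem_Icc] at h2 ⊢
        exact ⟨h2.1, h2.2.1, by omega⟩
      have hc1 : (Sj.filter (fun a => ¬ (n₁ + 1 ≤ a))).card ≤ n₁ - 1 := by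
        calc (Sj.filter (fun a => ¬ (n₁ + 1 ≤ a))).card
            ≤ ((Finset.Icc 1 n₁).erase j).card := Finset.card_le_card hfsub
          _ = n₁ - 1 := by
              rw [Finset.card_erase_of_mem (by rw [Finset.mem_Icc]; omega), Nat.card_Icc]
              omega
      have hc2 := Finset.card_filter_add_card_filter_not
        (s := Sj) (p := fun a => n₁ + 1 ≤ a)
      simp only [not_le] at hc1 hc2
      rw [hS₂def]
      omega
    have hcS₂r : (k : ℝ) - n₁ + 1 ≤ (S₂.card : ℝ) := by
      have : k + 1 ≤ S₂.card + n₁ := hcS₂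
      have hh : ((k : ℝ)) + 1 ≤ (S₂.card : ℝ) + n₁ := by exact_mod_cast this
      linarith
    have hsub : ∑ a ∈ S₂, |x j - x a| ≤ ∑ a ∈ Sj, |x j - x a| :=
      Finset.sum_le_sum_of_subset_of_nonneg (Finset.filter_subset _ _)
        (fun a _ _ => abs_nonneg _)
    have hterm : ∀ a ∈ S₂, θ + ((a : ℝ) - (n₁ + 1)) * L ≤ |x j - x a| := by
      intro a ha
      obtain ⟨ha1, han⟩ := hmemS₂ a ha
      have hd := hdist a ha1 han
      have hxa : x j ≤ x a := by
        have := hmono j a hj1 (by omega) han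
        exact this
      have habs : |x j - x a| = x a - x j := by
        rw [abs_sub_comm, abs_of_nonneg (by linarith)]
      rw [habs]
      push_cast
      linarith
    have h1 : ∑ a ∈ S₂, (θ + ((a : ℝ) - (n₁ + 1)) * L) ≤ ∑ a ∈ S₂, |x j - x a| :=
      Finset.sum_le_sum hterm
    have h2 : ∑ a ∈ S₂, (θ + ((a : ℝ) - (n₁ + 1)) * L)
        = (S₂.card : ℝ) * θ + ((∑ a ∈ S₂, (a : ℝ)) - (S₂.card : ℝ) * ((n₁ : ℝ) + 1)) * L := by
      rw [Finset.sum_add_distrib, Finset.sum_const, ← Finset.sum_mul,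
        Finset.sum_sub_distrib, Finset.sum_const]
      try simp only [nsmul_eq_mul]
      try ring
    have h3 := knnAux.sum_ge_shift S₂ (n₁ + 1) (fun a ha => (hmemS₂ a ha).1)
    have h4 : ((n₁ + 1 : ℕ) : ℝ) = (n₁ : ℝ) + 1 := by push_cast; ring
    rw [h4] at h3
    set c := (S₂.card : ℝ) with hcdef
    have hkey : ((k : ℝ) - n₁ - 2) * θ + ((k : ℝ) - n₁ - 2) * ((k : ℝ) - n₁ - 3) * L / 2
        ≤ c * θ + c * (c - 1) / 2 * L := by
      have hkn : (n₁ : ℝ) + 3 ≤ (k : ℝ) := by exact_mod_cast hk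
      have hθL : L ≤ θ := le_trans hLU hθU
      nlinarith [hcS₂r, hθL, hL, mul_nonneg (le_of_lt hL) (sub_nonneg.mpr hcS₂r),
        mul_nonneg (sub_nonneg.mpr hθL) (sub_nonneg.mpr hcS₂r)]
    calc (k : ℝ) * ((k : ℝ) + 1) * U / 2
        < ((k : ℝ) - n₁ - 2) * θ + ((k : ℝ) - n₁ - 2) * ((k : ℝ) - n₁ - 3) * L / 2 := hcond
      _ ≤ c * θ + c * (c - 1) / 2 * L := hkey
      _ ≤ ∑ a ∈ S₂, (θ + ((a : ℝ) - (n₁ + 1)) * L) := by rw [h2]; nlinarith [h3, hL]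
      _ ≤ ∑ a ∈ S₂, |x j - x a| := h1
      _ ≤ ∑ a ∈ Sj, |x j - x a| := hsub
  -- STEP 2 : upper bound on the normal point's score sum
  have hupsum : ∑ a ∈ Sj', |x j' - x a| ≤ (k : ℝ) * ((k : ℝ) + 1) * U / 2 := by
    set c := min j' (n - k) with hcdef
    have hc1 : n₁ + 1 ≤ c := by omega
    have hc2 : c ≤ j' := by omega
    have hc3 : j' ≤ c + k := by omega
    have hc4 : c + k ≤ n := by omega
    set T := (Finset.Icc c (c + k)).erase j' with hTdef
    have hTsub : T ⊆ (Finset.Icc 1 n).erase j' := by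
      intro t ht
      rw [Finset.mem_erase, Finset.mem_Icc] at ht ⊢
      omega
    have hTcard : T.card = k := by
      rw [Finset.card_erase_of_mem (by rw [Finset.mem_Icc]; omega), Nat.card_Icc]
      omega
    have hexch := knnAux.knn_sum_le (fun a => |x j' - x a|) _ Sj' T hTsub
      (by rw [hTcard, hSj'card]) hSj'min
    have hTsplit : T = Finset.Ico c j' ∪ Finset.Ioc j' (c + k) := by
      ext t
      rw [hTdef, Finset.mem_erase, Finset.mem_Icc, Finset.mem_union, Finset.mem_Ico,
        Finset.mem_Ioc]
      omega
    have hdisj : Disjoint (Finset.Ico c j') (Finset.Ioc j' (c + k)) := by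
      rw [Finset.disjoint_left]
      intro t h1 h2
      rw [Finset.mem_Ico] at h1
      rw [Finset.mem_Ioc] at h2
      omega
    set a := j' - c with hadef
    set b := c + k - j' with hbdef
    have habk : a + b = k := by omega
    have hIcoU : ∀ t ∈ Finset.Ico c j', |x j' - x t| ≤ ((j' : ℝ) - t) * U := by
      intro t ht
      rw [Finset.mem_Ico] at ht
      have h1 := hup2 t j' (by omega) (by omega) (by omega)
      have h2 := hmono t j' (by omega) (by omega) (by omega)
      rw [abs_of_nonneg (by linarith)]
      exact h1
    have hIocU : ∀ t ∈ Finset.Ioc j' (c + k), |x j' - x t| ≤ ((t : ℝ) - j') * U := by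
      intro t ht
      rw [Finset.mem_Ioc] at ht
      have h1 := hup2 j' t (by omega) (by omega) (by omega)
      have h2 := hmono j' t (by omega) (by omega) (by omega)
      rw [abs_of_nonpos (by linarith), neg_sub]
      exact h1
    have hleft : ∑ t ∈ Finset.Ico c j', |x j' - x t|
        ≤ (a : ℝ) * ((a : ℝ) + 1) / 2 * U := by
      calc ∑ t ∈ Finset.Ico c j', |x j' - x t|
          ≤ ∑ t ∈ Finset.Ico c j', ((j' : ℝ) - t) * U := Finset.sum_le_sum hIcoU
        _ = (∑ t ∈ Finset.Ico c j', ((j' : ℝ) - t)) * U := by rw [Finset.sum_mul]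
        _ = (a : ℝ) * ((a : ℝ) + 1) / 2 * U := by
            rw [knnAux.sum_Ico_rev c j' hc2, hadef]
    have hright : ∑ t ∈ Finset.Ioc j' (c + k), |x j' - x t|
        ≤ (b : ℝ) * ((b : ℝ) + 1) / 2 * U := by
      calc ∑ t ∈ Finset.Ioc j' (c + k), |x j' - x t|
          ≤ ∑ t ∈ Finset.Ioc j' (c + k), ((t : ℝ) - j') * U := Finset.sum_le_sum hIocU
        _ = (∑ t ∈ Finset.Ioc j' (c + k), ((t : ℝ) - j')) * U := by rw [Finset.sum_mul]
        _ = (b : ℝ) * ((b : ℝ) + 1) / 2 * U := by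
            rw [knnAux.sum_Ioc_rev j' (c + k) hc3, hbdef]
    have habr : (a : ℝ) + (b : ℝ) = (k : ℝ) := by exact_mod_cast congrArg Nat.cast habk
    have hTsum : ∑ t ∈ T, |x j' - x t| ≤ (k : ℝ) * ((k : ℝ) + 1) * U / 2 := by
      rw [hTsplit, Finset.sum_union hdisj, ← habr]
      have hU : (0 : ℝ) ≤ U := le_trans hL.le hLU
      nlinarith [hleft, hright, mul_nonneg (mul_nonneg (Nat.cast_nonneg a) (Nat.cast_nonneg b)) hU]
    exact le_trans hexch hTsum
  -- combine
  have hfinal : ∑ a ∈ Sj', |x j' - x a| < ∑ a ∈ Sj, |x j - x a| := lt_of_le_of_lt hupsum hlowsum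
  unfold knnScore
  have hinv : (0 : ℝ) < 1 / (k : ℝ) := by positivity
  exact mul_lt_mul_of_pos_left hfinal hinv
end

section
/- Let n_1 ≥ 2 and k be integers with k ≥ n_1 + 1, let 0 < L ≤ U be reals and θ > 0. Set n = n_1 + 2k and define x_1 < … < x_n by the gaps x_{i+1} − x_i = L for 1 ≤ i ≤ n_1 − 1, x_{n_1+1} − x_{n_1} = θ, x_{i+1} − x_i = L for n_1 + 1 ≤ i ≤ n_1 + k − 1, and x_{i+1} − x_i = U for n_1 + k ≤ i ≤ n − 1. If (1/k)·[n_1(n_1 − 1)L/2 + (k − n_1 + 1)((n_1 − 1)L + θ) + (k − n_1 + 1)(k − n_1)L/2] < (k + 1)U/2, then h_knn(1) < h_knn(n); that is, an anomaly scores strictly below a normal point, so k-NN fails to detect all the marginal clustered anomalies when the separating gap θ is too small relative to k. -/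
open Finset

private lemma sum_Icc_eq_sum_range' (f : ℕ → ℝ) (m n : ℕ) :
    ∑ i ∈ Finset.Icc m n, f i = ∑ j ∈ Finset.range (n + 1 - m), f (m + j) := by
  rw [← Finset.Ico_add_one_right_eq_Icc, Finset.sum_Ico_eq_sum_range]

private lemma gauss_sum (m : ℕ) :
    (∑ j ∈ Finset.range m, (j : ℝ)) = (m : ℝ) * ((m : ℝ) - 1) / 2 := by
  induction m with
  | zero => simp
  | succ p ih => rw [Finset.sum_range_succ, ih]; push_cast; ring

set_option maxHeartbeats 1600000 in
/-- **`k`-NN may fail to detect all marginal clustered anomalies when the separating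
gap `θ` is too small relative to `k`.** Let `n₁ ≥ 2`, `k ≥ n₁ + 1`, `0 < L ≤ U`,
`θ > 0`, `n = n₁ + 2k`, with gaps `x (i+1) − x i = L` for `1 ≤ i ≤ n₁ − 1`,
`x (n₁+1) − x n₁ = θ`, `x (i+1) − x i = L` for `n₁ + 1 ≤ i ≤ n₁ + k − 1` and
`x (i+1) − x i = U` for `n₁ + k ≤ i ≤ n − 1`. If
`(1/k)·[n₁(n₁−1)L/2 + (k − n₁ + 1)((n₁−1)L + θ) + (k − n₁ + 1)(k − n₁)L/2] < (k+1)U/2`,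
then the anomaly `x 1` scores strictly below the normal point `x n`. -/
theorem knn_fails_marginal_clustered_anomalies
    (n₁ k : ℕ) (hn₁ : 2 ≤ n₁) (hk : n₁ + 1 ≤ k)
    (L U θ : ℝ) (hL : 0 < L) (hLU : L ≤ U) (hθ : 0 < θ)
    (x : ℕ → ℝ)
    (hgapsA : ∀ i, 1 ≤ i → i ≤ n₁ - 1 → x (i + 1) - x i = L)
    (hgapθ : x (n₁ + 1) - x n₁ = θ)
    (hgapsB : ∀ i, n₁ + 1 ≤ i → i ≤ n₁ + k - 1 → x (i + 1) - x i = L)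
    (hgapsC : ∀ i, n₁ + k ≤ i → i ≤ n₁ + 2 * k - 1 → x (i + 1) - x i = U)
    (hcond : (1 / (k : ℝ)) *
        ((n₁ : ℝ) * ((n₁ : ℝ) - 1) * L / 2
          + ((k : ℝ) - (n₁ : ℝ) + 1) * (((n₁ : ℝ) - 1) * L + θ)
          + ((k : ℝ) - (n₁ : ℝ) + 1) * ((k : ℝ) - (n₁ : ℝ)) * L / 2)
        < ((k : ℝ) + 1) * U / 2) :
    ∀ S1 Sn : Finset ℕ,
      IsKNN x (n₁ + 2 * k) k 1 S1 → IsKNN x (n₁ + 2 * k) k (n₁ + 2 * k) Sn →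
      knnScore x k 1 S1 < knnScore x k (n₁ + 2 * k) Sn := by
  intro S1 Sn h1 hn
  set n := n₁ + 2 * k with hn_def
  -- single-step monotonicity
  have hstep : ∀ i, 1 ≤ i → i + 1 ≤ n → x i < x (i + 1) := by
    intro i hi hi'
    by_cases hA : i ≤ n₁ - 1
    · have := hgapsA i hi hA; linarith
    · by_cases hB : i = n₁
      · subst hB; linarith [hgapθ]
      · by_cases hC : i ≤ n₁ + k - 1
        · have := hgapsB i (by omega) hC; linarith
        · have := hgapsC i (by omega) (by omega); linarith
  -- strict monotonicity on [1, n]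
  have hmono : ∀ j i, 1 ≤ i → i < j → j ≤ n → x i < x j := by
    intro j
    induction j with
    | zero => intro i _ h _; omega
    | succ m ih =>
      intro i hi hij hj
      rcases Nat.lt_succ_iff_lt_or_eq.mp hij with h | h
      · exact (ih i hi h (by omega)).trans (hstep m (by omega) hj)
      · subst h; exact hstep i hi hj
  -- explicit formulas
  have hxA : ∀ a, 1 ≤ a → a ≤ n₁ → x a = x 1 + ((a : ℝ) - 1) * L := by
    intro a
    induction a with
    | zero => intro h; omega
    | succ m ih =>
      intro _ han
      rcases Nat.eq_zero_or_pos m with h | h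
      · subst h; norm_num
      · have hg := hgapsA m h (by omega)
        have hm := ih h (by omega)
        push_cast
        push_cast at hm
        nlinarith
  have hxB : ∀ a, n₁ + 1 ≤ a → a ≤ n₁ + k →
      x a = x 1 + ((n₁ : ℝ) - 1) * L + θ + ((a : ℝ) - (n₁ : ℝ) - 1) * L := by
    intro a ha
    induction a, ha using Nat.le_induction with
    | base =>
      intro _
      have h1' := hxA n₁ (by omega) le_rfl
      push_cast
      nlinarith [hgapθ]
    | succ m hm ih =>
      intro hmk
      have hg := hgapsB m hm (by omega)
      have him := ih (by omega)
      push_cast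
      push_cast at him
      nlinarith
  have hxC : ∀ a, n₁ + k ≤ a → a ≤ n →
      x a = x (n₁ + k) + ((a : ℝ) - (n₁ : ℝ) - (k : ℝ)) * U := by
    intro a ha
    induction a, ha using Nat.le_induction with
    | base => intro _; push_cast; ring_nf
    | succ m hm ih =>
      intro hmk
      have hg := hgapsC m hm (by omega)
      have him := ih (by omega)
      push_cast
      push_cast at him
      nlinarith
  -- S1 is exactly Icc 2 (k+1)
  have hS1 : S1 = Finset.Icc 2 (k + 1) := by
    obtain ⟨hsub, hcard, hmin⟩ := h1
    by_contra hneq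
    have hT1card : (Finset.Icc 2 (k + 1)).card = k := by
      rw [Nat.card_Icc]; omega
    have hex : ∃ a ∈ S1, a ∉ Finset.Icc 2 (k + 1) := by
      by_contra hno
      push_neg at hno
      exact hneq (Finset.eq_of_subset_of_card_le (fun a ha => hno a ha) (by omega))
    obtain ⟨a, haS, haT⟩ := hex
    have hbex : (Finset.Icc 2 (k + 1) \ S1).Nonempty := by
      rw [← Finset.card_pos]
      have hsub2 : Finset.Icc 2 (k + 1) ∩ S1 ⊆ S1.erase a := fun b hb =>
        Finset.mem_erase.mpr ⟨by rintro rfl; exact haT (Finset.mem_of_mem_inter_left hb),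
          Finset.mem_of_mem_inter_right hb⟩
      have h2 := Finset.card_le_card hsub2
      have h3 := Finset.card_erase_of_mem haS
      have h4 := Finset.card_inter_add_card_sdiff (Finset.Icc 2 (k + 1)) S1
      omega
    obtain ⟨b, hb⟩ := hbex
    rw [Finset.mem_sdiff] at hb
    obtain ⟨hbT, hbS⟩ := hb
    rw [Finset.mem_Icc] at hbT haT
    have haE := hsub haS
    rw [Finset.mem_erase, Finset.mem_Icc] at haE
    have hbE : b ∈ (Finset.Icc 1 n).erase 1 := by
      rw [Finset.mem_erase, Finset.mem_Icc]; omega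
    have hle := hmin a haS b hbE hbS
    have h1b : x 1 < x b := hmono b 1 le_rfl (by omega) (by omega)
    have hba : x b < x a := hmono a b (by omega) (by omega) (by omega)
    rw [abs_sub_comm (x 1) (x a), abs_sub_comm (x 1) (x b),
      abs_of_pos (by linarith), abs_of_pos (by linarith)] at hle
    linarith
  -- Sn is exactly Icc (n₁+k) (n-1)
  have hSn : Sn = Finset.Icc (n₁ + k) (n - 1) := by
    obtain ⟨hsub, hcard, hmin⟩ := hn
    by_contra hneq
    have hTcard : (Finset.Icc (n₁ + k) (n - 1)).card = k := by
      rw [Nat.card_Icc]; omega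
    have hex : ∃ a ∈ Sn, a ∉ Finset.Icc (n₁ + k) (n - 1) := by
      by_contra hno
      push_neg at hno
      exact hneq (Finset.eq_of_subset_of_card_le (fun a ha => hno a ha) (by omega))
    obtain ⟨a, haS, haT⟩ := hex
    have hbex : (Finset.Icc (n₁ + k) (n - 1) \ Sn).Nonempty := by
      rw [← Finset.card_pos]
      have hsub2 : Finset.Icc (n₁ + k) (n - 1) ∩ Sn ⊆ Sn.erase a := fun b hb =>
        Finset.mem_erase.mpr ⟨by rintro rfl; exact haT (Finset.mem_of_mem_inter_left hb),
          Finset.mem_of_mem_inter_right hb⟩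
      have h2 := Finset.card_le_card hsub2
      have h3 := Finset.card_erase_of_mem haS
      have h4 := Finset.card_inter_add_card_sdiff (Finset.Icc (n₁ + k) (n - 1)) Sn
      omega
    obtain ⟨b, hb⟩ := hbex
    rw [Finset.mem_sdiff] at hb
    obtain ⟨hbT, hbS⟩ := hb
    rw [Finset.mem_Icc] at hbT haT
    have haE := hsub haS
    rw [Finset.mem_erase, Finset.mem_Icc] at haE
    have hbE : b ∈ (Finset.Icc 1 n).erase n := by
      rw [Finset.mem_erase, Finset.mem_Icc]; omega
    have hle := hmin a haS b hbE hbS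
    have hbn : x b < x n := hmono n b (by omega) (by omega) le_rfl
    have hab : x a < x b := hmono b a (by omega) (by omega) (by omega)
    rw [abs_of_pos (by linarith), abs_of_pos (by linarith)] at hle
    linarith
  -- compute score of point 1
  have hscore1 : knnScore x k 1 S1 = (1 / (k : ℝ)) *
      ((n₁ : ℝ) * ((n₁ : ℝ) - 1) * L / 2
        + ((k : ℝ) - (n₁ : ℝ) + 1) * (((n₁ : ℝ) - 1) * L + θ)
        + ((k : ℝ) - (n₁ : ℝ) + 1) * ((k : ℝ) - (n₁ : ℝ)) * L / 2) := by
    rw [knnScore, hS1]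
    congr 1
    have hsplit : Finset.Icc 2 (k + 1) = Finset.Icc 2 n₁ ∪ Finset.Icc (n₁ + 1) (k + 1) := by
      ext z; simp only [Finset.mem_Icc, Finset.mem_union]; omega
    have hdisj : Disjoint (Finset.Icc 2 n₁) (Finset.Icc (n₁ + 1) (k + 1)) := by
      rw [Finset.disjoint_left]
      intro z hz hz'
      rw [Finset.mem_Icc] at hz hz'
      omega
    rw [hsplit, Finset.sum_union hdisj]
    have hsum1 : ∑ a ∈ Finset.Icc 2 n₁, |x 1 - x a|
        = (n₁ : ℝ) * ((n₁ : ℝ) - 1) * L / 2 := by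
      rw [sum_Icc_eq_sum_range']
      have heq : ∀ j ∈ Finset.range (n₁ + 1 - 2), |x 1 - x (2 + j)| = ((j : ℝ) + 1) * L := by
        intro j hj
        rw [Finset.mem_range] at hj
        have hx := hxA (2 + j) (by omega) (by omega)
        rw [abs_sub_comm, hx]
        push_cast
        rw [abs_of_nonneg (by nlinarith)]
        ring
      rw [Finset.sum_congr rfl heq]
      have : ∑ j ∈ Finset.range (n₁ + 1 - 2), ((j : ℝ) + 1) * L
          = ((∑ j ∈ Finset.range (n₁ + 1 - 2), (j : ℝ)) + (n₁ + 1 - 2 : ℕ)) * L := by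
        rw [← Finset.sum_mul, Finset.sum_add_distrib, Finset.sum_const, Finset.card_range]
        push_cast
        ring
      rw [this, gauss_sum]
      have hc : ((n₁ + 1 - 2 : ℕ) : ℝ) = (n₁ : ℝ) - 1 := by
        have : n₁ + 1 - 2 = n₁ - 1 := by omega
        rw [this]
        push_cast [Nat.cast_sub (by omega : 1 ≤ n₁)]
        ring
      rw [hc]
      ring
    have hsum2 : ∑ a ∈ Finset.Icc (n₁ + 1) (k + 1), |x 1 - x a|
        = ((k : ℝ) - (n₁ : ℝ) + 1) * (((n₁ : ℝ) - 1) * L + θ)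
          + ((k : ℝ) - (n₁ : ℝ) + 1) * ((k : ℝ) - (n₁ : ℝ)) * L / 2 := by
      rw [sum_Icc_eq_sum_range']
      have heq : ∀ j ∈ Finset.range (k + 1 + 1 - (n₁ + 1)),
          |x 1 - x (n₁ + 1 + j)| = ((n₁ : ℝ) - 1) * L + θ + (j : ℝ) * L := by
        intro j hj
        rw [Finset.mem_range] at hj
        have hx := hxB (n₁ + 1 + j) (by omega) (by omega)
        have hn1R : (2 : ℝ) ≤ (n₁ : ℝ) := by exact_mod_cast hn₁
        have hjR : (0 : ℝ) ≤ (j : ℝ) := Nat.cast_nonneg j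
        rw [abs_sub_comm, hx]
        push_cast
        rw [abs_of_nonneg (by nlinarith)]
        ring
      rw [Finset.sum_congr rfl heq]
      have hT : ∑ j ∈ Finset.range (k + 1 + 1 - (n₁ + 1)),
          (((n₁ : ℝ) - 1) * L + θ + (j : ℝ) * L)
          = ((k + 1 + 1 - (n₁ + 1) : ℕ) : ℝ) * (((n₁ : ℝ) - 1) * L + θ)
            + (∑ j ∈ Finset.range (k + 1 + 1 - (n₁ + 1)), (j : ℝ)) * L := by
        rw [Finset.sum_add_distrib, Finset.sum_const, Finset.card_range, ← Finset.sum_mul,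
          nsmul_eq_mul]
      have hc : ((k + 1 + 1 - (n₁ + 1) : ℕ) : ℝ) = (k : ℝ) - (n₁ : ℝ) + 1 := by
        have h' : k + 1 + 1 - (n₁ + 1) = k + 1 - n₁ := by omega
        rw [h']
        push_cast [Nat.cast_sub (by omega : n₁ ≤ k + 1)]
        ring
      rw [hT, gauss_sum, hc]
      ring
    rw [hsum1, hsum2]
    ring
  -- compute score of point n
  have hscoren : knnScore x k n Sn = ((k : ℝ) + 1) * U / 2 := by
    rw [knnScore, hSn]
    have hsum : ∑ a ∈ Finset.Icc (n₁ + k) (n - 1), |x n - x a|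
        = (k : ℝ) * ((k : ℝ) + 1) * U / 2 := by
      rw [sum_Icc_eq_sum_range']
      have hxn : x n = x (n₁ + k) + (k : ℝ) * U := by
        have h' := hxC n (by omega) le_rfl
        have hcn : ((n : ℕ) : ℝ) = (n₁ : ℝ) + 2 * (k : ℝ) := by
          rw [hn_def]; push_cast; ring
        rw [h', hcn]
        ring
      have heq : ∀ j ∈ Finset.range (n - 1 + 1 - (n₁ + k)),
          |x n - x (n₁ + k + j)| = ((k : ℝ) - (j : ℝ)) * U := by
        intro j hj
        rw [Finset.mem_range] at hj
        have hjk : j < k := by omega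
        have hx := hxC (n₁ + k + j) (by omega) (by omega)
        rw [hx, hxn]
        push_cast
        rw [show x (n₁ + k) + (k : ℝ) * U - (x (n₁ + k) + ((n₁ : ℝ) + (k : ℝ) + (j : ℝ) - (n₁ : ℝ) - (k : ℝ)) * U) = ((k : ℝ) - (j : ℝ)) * U by ring]
        rw [abs_of_nonneg]
        have : (j : ℝ) < (k : ℝ) := by exact_mod_cast hjk
        nlinarith
      rw [Finset.sum_congr rfl heq]
      have hrange : n - 1 + 1 - (n₁ + k) = k := by omega
      rw [hrange, ← Finset.sum_mul, Finset.sum_sub_distrib, Finset.sum_const, Finset.card_range,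
        nsmul_eq_mul, gauss_sum]
      ring
    rw [hsum]
    have hk0 : (k : ℝ) ≠ 0 := Nat.cast_ne_zero.mpr (by omega)
    field_simp
  rw [hscore1, hscoren]
  exact hcond
end

section
/- Let n ≥ 3 be an integer, let s_1, …, s_{n−1} be strictly positive reals, and let j_0 be an index with 1 < j_0 < n. Then H(j_0; (s_1, …, s_{n−1})) > H(n; (s_{n−1}, s_{n−2}, …, s_{j_0}, s_1, s_2, …, s_{j_0−1})); that is, the closed-form iForest depth of an interior point strictly exceeds the depth of the rightmost point of the dataset obtained by reversing the right-hand gaps and appending the left-hand gaps. -/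
open Finset

/-- For a vector `t` of strictly positive gaps `t 1, …, t (n−1)` (consecutive
differences of sorted points), the closed-form iForest depth of the `i`-th point:
`H(i; t) = Σ_{j=1}^{i−1} t j / (t j + … + t (i−1)) + Σ_{j=i}^{n−1} t j / (t i + … + t j)`. -/
noncomputable def gapDepth (t : ℕ → ℝ) (n i : ℕ) : ℝ :=
  ∑ j ∈ Finset.Icc 1 (i - 1), t j / (∑ l ∈ Finset.Icc j (i - 1), t l) +
    ∑ j ∈ Finset.Icc i (n - 1), t j / (∑ l ∈ Finset.Icc i j, t l)

private lemma sum_shift' (f : ℕ → ℝ) (a b c : ℕ) :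
    ∑ j ∈ Finset.Icc (a+c) (b+c), f j = ∑ j ∈ Finset.Icc a b, f (j+c) := by
  rw [← Finset.map_add_right_Icc, Finset.sum_map]
  rfl

private lemma sum_reflect' (f : ℕ → ℝ) (a b N : ℕ) (hab : a ≤ b) (hb : b ≤ N) :
    ∑ j ∈ Finset.Icc a b, f (N - j) = ∑ j ∈ Finset.Icc (N - b) (N - a), f j := by
  apply Finset.sum_nbij' (i := fun j => N - j) (j := fun j => N - j) <;>
    intros x hx <;> simp only [Finset.mem_Icc] at * <;> omega

private lemma sum_Icc_split' (f : ℕ → ℝ) (a b c : ℕ) (hab : a ≤ b+1) (hbc : b ≤ c) :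
    ∑ j ∈ Finset.Icc a c, f j = ∑ j ∈ Finset.Icc a b, f j + ∑ j ∈ Finset.Icc (b+1) c, f j := by
  rw [← Finset.sum_union]
  · congr 1
    ext x
    simp only [Finset.mem_union, Finset.mem_Icc]
    omega
  · rw [Finset.disjoint_left]
    intro x hx hx'
    simp only [Finset.mem_Icc] at hx hx'
    omega

/-- **Rearrangement lemma for the closed-form iForest depth.**
Let `n ≥ 3`, let `s 1, …, s (n−1)` be strictly positive gaps, and let `1 < j₀ < n`.
Then the depth of the interior point `j₀` w.r.t. the gaps `s` strictly exceeds the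
depth of the rightmost point of the dataset whose gaps are
`(s (n−1), s (n−2), …, s j₀, s 1, s 2, …, s (j₀ − 1))`. -/
theorem gapDepth_interior_gt_rearranged_rightmost
    (n : ℕ) (hn : 3 ≤ n) (s : ℕ → ℝ)
    (hs : ∀ j, 1 ≤ j → j ≤ n - 1 → 0 < s j)
    (j₀ : ℕ) (hj₀1 : 1 < j₀) (hj₀n : j₀ < n) :
    gapDepth (fun m => if m ≤ n - j₀ then s (n - m) else s (m - (n - j₀))) n n
      < gapDepth s n j₀ := by
  have ha1 : 1 ≤ n - j₀ := by omega
  set a := n - j₀ with ha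
  set t : ℕ → ℝ := fun m => if m ≤ a then s (n - m) else s (m - a) with ht
  have hC : 0 < ∑ m ∈ Finset.Icc 1 (j₀ - 1), s m := by
    apply Finset.sum_pos
    · intro i hi
      simp only [Finset.mem_Icc] at hi
      exact hs i hi.1 (by omega)
    · exact Finset.nonempty_Icc.2 (by omega)
  unfold gapDepth
  rw [show Finset.Icc n (n-1) = ∅ from Finset.Icc_eq_empty (by omega), Finset.sum_empty, add_zero]
  -- split LHS sum at a
  rw [sum_Icc_split' _ 1 a (n-1) (by omega) (by omega)]
  -- second part equals RHS first sum
  have part2 : ∑ j ∈ Finset.Icc (a+1) (n-1), t j / (∑ l ∈ Finset.Icc j (n-1), t l)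
      = ∑ j ∈ Finset.Icc 1 (j₀ - 1), s j / (∑ l ∈ Finset.Icc j (j₀ - 1), s l) := by
    have h1 : (a+1 : ℕ) = 1 + a := by omega
    have h2 : (n-1 : ℕ) = (j₀ - 1) + a := by omega
    rw [h1, h2, sum_shift']
    apply Finset.sum_congr rfl
    intro k hk
    simp only [Finset.mem_Icc] at hk
    have htk : t (k + a) = s k := by
      simp only [ht]
      rw [if_neg (by omega)]
      congr 1
      omega
    rw [htk]
    congr 1
    have h3 : ∀ x, x ∈ Finset.Icc (k+a) ((j₀-1)+a) → t x = s (x - a) := by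
      intro x hx
      simp only [Finset.mem_Icc] at hx
      simp only [ht]
      rw [if_neg (by omega)]
    rw [Finset.sum_congr rfl h3, sum_shift' (fun x => s (x - a)) k (j₀-1) a]
    apply Finset.sum_congr rfl
    intro x _
    congr 1
    omega
  rw [part2]
  -- remains: strict inequality between part1 and RHS second sum
  have hB : ∑ j ∈ Finset.Icc j₀ (n-1), s j / (∑ l ∈ Finset.Icc j₀ j, s l)
      = ∑ k ∈ Finset.Icc 1 a, s (n - k) / (∑ l ∈ Finset.Icc j₀ (n - k), s l) := by
    have := sum_reflect' (fun j => s j / (∑ l ∈ Finset.Icc j₀ j, s l)) 1 a n (by omega) (by omega)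
    rw [show n - a = j₀ by omega, show n - 1 = n - 1 from rfl] at this
    rw [← this]
  have key : ∑ j ∈ Finset.Icc 1 a, t j / (∑ l ∈ Finset.Icc j (n-1), t l)
      < ∑ k ∈ Finset.Icc 1 a, s (n - k) / (∑ l ∈ Finset.Icc j₀ (n - k), s l) := by
    apply Finset.sum_lt_sum_of_nonempty (Finset.nonempty_Icc.2 (by omega))
    intro k hk
    simp only [Finset.mem_Icc] at hk
    have htk : t k = s (n - k) := by
      simp only [ht]
      rw [if_pos hk.2]
    have hE : 0 < ∑ l ∈ Finset.Icc j₀ (n - k), s l := by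
      apply Finset.sum_pos
      · intro i hi
        simp only [Finset.mem_Icc] at hi
        exact hs i (by omega) (by omega)
      · exact Finset.nonempty_Icc.2 (by omega)
    have hD : ∑ l ∈ Finset.Icc k (n-1), t l
        = (∑ l ∈ Finset.Icc j₀ (n - k), s l) + ∑ m ∈ Finset.Icc 1 (j₀ - 1), s m := by
      rw [sum_Icc_split' _ k a (n-1) (by omega) (by omega)]
      congr 1
      · have h3 : ∀ x, x ∈ Finset.Icc k a → t x = s (n - x) := by
          intro x hx
          simp only [Finset.mem_Icc] at hx
          simp only [ht]
          rw [if_pos hx.2]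
        rw [Finset.sum_congr rfl h3, sum_reflect' s k a n (by omega) (by omega),
          show n - a = j₀ by omega]
      · have h3 : ∀ x, x ∈ Finset.Icc (a+1) (n-1) → t x = s (x - a) := by
          intro x hx
          simp only [Finset.mem_Icc] at hx
          simp only [ht]
          rw [if_neg (by omega)]
        rw [Finset.sum_congr rfl h3]
        have h1 : (a+1 : ℕ) = 1 + a := by omega
        have h2 : (n-1 : ℕ) = (j₀ - 1) + a := by omega
        rw [h1, h2, sum_shift' (fun x => s (x - a)) 1 (j₀-1) a]
        apply Finset.sum_congr rfl
        intro x _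
        congr 1
        omega
    rw [htk, hD]
    apply div_lt_div_of_pos_left (hs (n-k) (by omega) (by omega)) hE
    linarith
  linarith
end

section
/- Let n ≥ 2 be an integer and X_1, …, X_n be i.i.d. random variables uniformly distributed on [0, 1]. Let L = min_{1 ≤ i < j ≤ n} |X_i − X_j| be the minimum pairwise distance (equivalently, the minimum adjacent spacing of the order statistics). Then for every real t with 0 ≤ t ≤ 1/(n − 1), P(L > t) = (1 − (n − 1)t)^n. -/
open MeasureTheory ProbabilityTheory

open Set

private lemma msp_chain_aux {n : ℕ} (t : ℝ) (f : Fin n → ℝ)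
    (h : ∀ m : ℕ, (hm : m + 1 < n) → t < f ⟨m + 1, hm⟩ - f ⟨m, Nat.lt_of_succ_lt hm⟩) :
    ∀ d k : ℕ, (hd : k + d + 1 < n) →
      t * ((d : ℝ) + 1) < f ⟨k + d + 1, hd⟩ - f ⟨k, by omega⟩ := by
  intro d
  induction d with
  | zero => intro k hd; simpa using h k hd
  | succ d ih =>
      intro k hd
      have h1 := h (k + d + 1) (by omega)
      have h2 := ih k (by omega)
      have : t * ((d : ℝ) + 1 + 1) < f ⟨k + d + 1 + 1, by omega⟩ - f ⟨k, by omega⟩ := by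
        linarith
      convert this using 2
      push_cast; ring
      rfl

private lemma msp_chain {n : ℕ} {t : ℝ} {f : Fin n → ℝ}
    (h : ∀ m : ℕ, (hm : m + 1 < n) → t < f ⟨m + 1, hm⟩ - f ⟨m, Nat.lt_of_succ_lt hm⟩)
    (k l : Fin n) (hkl : (k : ℕ) < (l : ℕ)) :
    t * (((l : ℕ) : ℝ) - ((k : ℕ) : ℝ)) < f l - f k := by
  have h1 := msp_chain_aux t f h ((l : ℕ) - (k : ℕ) - 1) (k : ℕ) (by omega)
  have e1 : (⟨(k : ℕ) + ((l : ℕ) - (k : ℕ) - 1) + 1, by omega⟩ : Fin n) = l :=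
    Fin.ext (by simp; omega)
  have e2 : (⟨(k : ℕ), by omega⟩ : Fin n) = k := Fin.ext rfl
  rw [e1, e2] at h1
  have e3 : (((l : ℕ) - (k : ℕ) - 1 : ℕ) : ℝ) + 1 = ((l : ℕ) : ℝ) - ((k : ℕ) : ℝ) := by
    push_cast [Nat.cast_sub hkl.le, Nat.cast_sub (by omega : 1 ≤ (l : ℕ) - (k : ℕ))]
    ring
  linarith [e3 ▸ h1]

private lemma msp_mem_iff {n : ℕ} (hn : 2 ≤ n) {t : ℝ} (ht0 : 0 ≤ t)
    (σ : Equiv.Perm (Fin n)) (x : Fin n → ℝ) :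
    ((∀ i, x i ∈ Icc (0:ℝ) 1) ∧ (∀ i j, i ≠ j → t < |x i - x j|) ∧ StrictMono (x ∘ σ))
      ↔ ((∀ i, x i - t * ((σ.symm i : ℕ) : ℝ) ∈ Icc (0:ℝ) (1 - ((n:ℝ) - 1) * t)) ∧
          StrictMono ((fun i => x i - t * ((σ.symm i : ℕ) : ℝ)) ∘ σ)) := by
  have hcast : (((n - 1 : ℕ)) : ℝ) = (n : ℝ) - 1 := by
    push_cast [Nat.cast_sub (by omega : 1 ≤ n)]; ring
  constructor
  · rintro ⟨hIcc, hS, hmono⟩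
    have hcons : ∀ m : ℕ, (hm : m + 1 < n) →
        t < (x ∘ σ) ⟨m + 1, hm⟩ - (x ∘ σ) ⟨m, Nat.lt_of_succ_lt hm⟩ := by
      intro m hm
      have hlt : (⟨m, Nat.lt_of_succ_lt hm⟩ : Fin n) < ⟨m + 1, hm⟩ := by
        simp [Fin.lt_def]
      have h1 := hmono hlt
      have hne : σ ⟨m + 1, hm⟩ ≠ σ ⟨m, Nat.lt_of_succ_lt hm⟩ := by
        intro h; have := σ.injective h; simp [Fin.ext_iff] at this
      have h2 := hS _ _ hne
      simp only [Function.comp_apply] at h1 ⊢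
      rwa [abs_of_pos (sub_pos.mpr h1)] at h2
    have hchain : ∀ k l : Fin n, (k : ℕ) < (l : ℕ) →
        t * (((l : ℕ) : ℝ) - ((k : ℕ) : ℝ)) < x (σ l) - x (σ k) :=
      fun k l hkl => msp_chain hcons k l hkl
    have hchain' : ∀ k l : Fin n, (k : ℕ) ≤ (l : ℕ) →
        t * (((l : ℕ) : ℝ) - ((k : ℕ) : ℝ)) ≤ x (σ l) - x (σ k) := by
      intro k l hkl
      rcases eq_or_lt_of_le hkl with heq | hlt
      · have : k = l := Fin.ext heq
        subst this; simp
      · exact (hchain k l hlt).le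
    constructor
    · intro i
      have hi : x i = x (σ (σ.symm i)) := by rw [Equiv.apply_symm_apply]
      set k : Fin n := σ.symm i with hk
      have h0 := hchain' ⟨0, by omega⟩ k (Nat.zero_le _)
      have hl := hchain' k ⟨n - 1, by omega⟩ (by simp; omega)
      simp only [Fin.val_mk, Nat.cast_zero, hcast] at h0 hl
      have hb0 := (hIcc (σ ⟨0, by omega⟩)).1
      have hb1 := (hIcc (σ ⟨n - 1, by omega⟩)).2
      constructor
      · rw [hi]; linarith
      · rw [hi]; linarith
    · intro a b hab
      have hab' : (a : ℕ) < (b : ℕ) := hab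
      have := hchain a b hab'
      simp only [Function.comp_apply, Equiv.symm_apply_apply]
      linarith
  · rintro ⟨hIcc', hg⟩
    have hg' : ∀ a b : Fin n, a < b →
        x (σ a) - t * ((a : ℕ) : ℝ) < x (σ b) - t * ((b : ℕ) : ℝ) := by
      intro a b hab
      have := hg hab
      simpa using this
    have hkn : ∀ k : Fin n, ((k : ℕ) : ℝ) ≤ (n : ℝ) - 1 := by
      intro k
      rw [← hcast]
      exact_mod_cast Nat.le_sub_one_of_lt k.isLt
    refine ⟨?_, ?_, ?_⟩
    · intro i
      have h1 := hIcc' i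
      have h2 : (0:ℝ) ≤ t * ((σ.symm i : ℕ) : ℝ) := by positivity
      have h3 : t * ((σ.symm i : ℕ) : ℝ) ≤ t * ((n : ℝ) - 1) :=
        mul_le_mul_of_nonneg_left (hkn _) ht0
      obtain ⟨h4, h5⟩ := h1
      constructor <;> nlinarith
    · have key : ∀ i j, (σ.symm i : ℕ) < (σ.symm j : ℕ) → t < x j - x i := by
        intro i j hkl
        have h1 := hg' (σ.symm i) (σ.symm j) hkl
        rw [Equiv.apply_symm_apply, Equiv.apply_symm_apply] at h1
        have h2 : ((σ.symm i : ℕ) : ℝ) + 1 ≤ ((σ.symm j : ℕ) : ℝ) := by exact_mod_cast hkl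
        nlinarith
      intro i j hij
      have hne : (σ.symm i : ℕ) ≠ (σ.symm j : ℕ) := by
        simp only [ne_eq, Fin.val_eq_val, EmbeddingLike.apply_eq_iff_eq]
        exact hij
      rcases lt_or_gt_of_ne hne with h | h
      · have := key i j h
        calc t < x j - x i := this
          _ ≤ |x j - x i| := le_abs_self _
          _ = |x i - x j| := abs_sub_comm _ _
      · have := key j i h
        calc t < x i - x j := this
          _ ≤ |x i - x j| := le_abs_self _
    · intro a b hab
      have h1 := hg' a b hab
      have h2 : ((a : ℕ) : ℝ) ≤ ((b : ℕ) : ℝ) := by exact_mod_cast (le_of_lt hab)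
      have h3 : t * ((a : ℕ) : ℝ) ≤ t * ((b : ℕ) : ℝ) := mul_le_mul_of_nonneg_left h2 ht0
      simp only [Function.comp_apply]
      linarith

private lemma msp_perm_unique {n : ℕ} {f : Fin n → ℝ} {σ τ : Equiv.Perm (Fin n)}
    (hσ : StrictMono (f ∘ σ)) (hτ : StrictMono (f ∘ τ)) : σ = τ := by
  have he : StrictMono (fun k => σ.symm (τ k) : Fin n → Fin n) := by
    intro a b hab
    have h1 : (f ∘ σ) (σ.symm (τ a)) < (f ∘ σ) (σ.symm (τ b)) := by
      simpa [Function.comp] using hτ hab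
    exact hσ.lt_iff_lt.mp h1
  have hid : (fun k => σ.symm (τ k) : Fin n → Fin n) = id := by
    haveI : WellFoundedLT (Fin n) := inferInstance
    refine (StrictMono.range_inj (β := Fin n) (γ := Fin n) he
      (strictMono_id : StrictMono (id : Fin n → Fin n))).mp ?_
    rw [Set.range_id]
    exact Set.range_eq_univ.mpr fun k => ⟨τ.symm (σ k), by simp⟩
  refine Equiv.ext fun k => ?_
  have := congrFun hid k
  simp only [id_eq] at this
  calc σ k = σ (σ.symm (τ k)) := by rw [this]
    _ = τ k := σ.apply_symm_apply _

private lemma msp_exists_sort {n : ℕ} {f : Fin n → ℝ} (hf : Function.Injective f) :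
    ∃ σ : Equiv.Perm (Fin n), StrictMono (f ∘ σ) :=
  ⟨Tuple.sort f, (Tuple.monotone_sort f).strictMono_of_injective
    (hf.comp (Tuple.sort f).injective)⟩

private lemma msp_diag_null {n : ℕ} (i j : Fin n) (hij : i ≠ j) :
    (volume : Measure (Fin n → ℝ)) {y | y i = y j} = 0 := by
  classical
  have hmp := volume_preserving_piEquivPiSubtypeProd (fun _ : Fin n => ℝ) (· = i)
  set e := MeasurableEquiv.piEquivPiSubtypeProd (fun _ : Fin n => ℝ) (· = i) with he
  set F : Set ((({k : Fin n // k = i}) → ℝ) × (({k : Fin n // ¬ k = i}) → ℝ)) :=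
    {q | q.1 ⟨i, rfl⟩ = q.2 ⟨j, fun h => hij h.symm⟩} with hF
  have hFm : MeasurableSet F := by
    apply measurableSet_eq_fun
    · exact (measurable_pi_apply _).comp measurable_fst
    · exact (measurable_pi_apply _).comp measurable_snd
  have hpre : {y : Fin n → ℝ | y i = y j} = e ⁻¹' F := by
    ext y
    simp [hF, he, MeasurableEquiv.piEquivPiSubtypeProd, Equiv.piEquivPiSubtypeProd]
  rw [hpre, hmp.measure_preimage hFm.nullMeasurableSet]
  rw [Measure.volume_eq_prod, Measure.prod_apply hFm]
  have : ∀ a : ({k : Fin n // k = i}) → ℝ,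
      (volume : Measure (({k : Fin n // ¬ k = i}) → ℝ)) (Prod.mk a ⁻¹' F) = 0 := by
    intro a
    have : Prod.mk a ⁻¹' F = {b : ({k : Fin n // ¬ k = i}) → ℝ |
        b ⟨j, fun h => hij h.symm⟩ = a ⟨i, rfl⟩} := by
      ext b; simp [hF, eq_comm]
    rw [this]
    exact Measure.pi_hyperplane _ _ _
  simp [this]

private lemma msp_noninj_null (n : ℕ) :
    (volume : Measure (Fin n → ℝ)) {y | ¬ Function.Injective y} = 0 := by
  have hsub : {y : Fin n → ℝ | ¬ Function.Injective y}
      ⊆ ⋃ i, ⋃ j, {y : Fin n → ℝ | i ≠ j ∧ y i = y j} := by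
    intro y hy
    simp only [Set.mem_setOf_eq, Function.not_injective_iff] at hy
    obtain ⟨a, b, heq, hne⟩ := hy
    exact Set.mem_iUnion.mpr ⟨a, Set.mem_iUnion.mpr ⟨b, hne, heq⟩⟩
  refine measure_mono_null hsub ?_
  refine measure_iUnion_null fun i => measure_iUnion_null fun j => ?_
  by_cases hij : i = j
  · simp [hij]
  · exact measure_mono_null (fun y hy => hy.2) (msp_diag_null i j hij)

private lemma msp_joint {Ω : Type*} [MeasurableSpace Ω] (μ : Measure Ω) [IsProbabilityMeasure μ]
    (n : ℕ) (X : Fin n → Ω → ℝ) (hmeas : ∀ i, Measurable (X i))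
    (hindep : iIndepFun X μ)
    (hunif : ∀ i, Measure.map (X i) μ = volume.restrict (Set.Icc (0 : ℝ) 1)) :
    Measure.map (fun ω i => X i ω) μ
      = Measure.pi (fun _ : Fin n => volume.restrict (Set.Icc (0 : ℝ) 1)) := by
  refine (Measure.pi_eq fun s hs => ?_).symm
  rw [Measure.map_apply (measurable_pi_lambda _ hmeas) (MeasurableSet.univ_pi hs)]
  have hpre : (fun ω i => X i ω) ⁻¹' (Set.pi Set.univ s) = ⋂ i ∈ Finset.univ, X i ⁻¹' s i := by
    ext ω; simp [Set.mem_pi]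
  rw [hpre, hindep.measure_inter_preimage_eq_mul Finset.univ (fun i _ => hs i)]
  refine Finset.prod_congr rfl fun i _ => ?_
  rw [← hunif i, Measure.map_apply (hmeas i) (hs i)]

private lemma msp_pi_restrict (n : ℕ) :
    Measure.pi (fun _ : Fin n => volume.restrict (Set.Icc (0 : ℝ) 1))
      = (volume : Measure (Fin n → ℝ)).restrict (Set.pi Set.univ fun _ => Set.Icc 0 1) := by
  refine Measure.pi_eq fun s hs => ?_
  rw [Measure.restrict_apply (MeasurableSet.univ_pi hs), ← Set.pi_inter_distrib, volume_pi_pi]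
  exact Finset.prod_congr rfl fun i _ => (Measure.restrict_apply (hs i)).symm

private def mspA (n : ℕ) (t : ℝ) (σ : Equiv.Perm (Fin n)) : Set (Fin n → ℝ) :=
  {x | (∀ i, x i ∈ Icc (0:ℝ) 1) ∧ (∀ i j, i ≠ j → t < |x i - x j|) ∧ StrictMono (x ∘ σ)}

private def mspB (n : ℕ) (c : ℝ) (σ : Equiv.Perm (Fin n)) : Set (Fin n → ℝ) :=
  {y | (∀ i, y i ∈ Icc (0:ℝ) c) ∧ StrictMono (y ∘ σ)}

private lemma msp_S_meas (n : ℕ) (t : ℝ) :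
    MeasurableSet {x : Fin n → ℝ | ∀ i j, i ≠ j → t < |x i - x j|} := by
  have h : {x : Fin n → ℝ | ∀ i j, i ≠ j → t < |x i - x j|}
      = ⋂ i, ⋂ j, {x : Fin n → ℝ | i ≠ j → t < |x i - x j|} := by
    ext x; simp
  rw [h]
  refine MeasurableSet.iInter fun i => MeasurableSet.iInter fun j => ?_
  by_cases hij : i = j
  · have : {x : Fin n → ℝ | i ≠ j → t < |x i - x j|} = Set.univ := by ext x; simp [hij]
    rw [this]; exact MeasurableSet.univ
  · have : {x : Fin n → ℝ | i ≠ j → t < |x i - x j|} = {x | t < |x i - x j|} := by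
      ext x; simp [hij]
    rw [this]
    exact measurableSet_lt measurable_const
      (((measurable_pi_apply i).sub (measurable_pi_apply j)).abs)

private lemma msp_Icc_meas (n : ℕ) (a : ℝ) :
    MeasurableSet {x : Fin n → ℝ | ∀ i, x i ∈ Icc (0:ℝ) a} := by
  have h : {x : Fin n → ℝ | ∀ i, x i ∈ Icc (0:ℝ) a}
      = ⋂ i, (fun x : Fin n → ℝ => x i) ⁻¹' Icc (0:ℝ) a := by ext x; simp
  rw [h]
  exact MeasurableSet.iInter fun i => (measurable_pi_apply i) measurableSet_Icc

private lemma msp_mono_meas (n : ℕ) (σ : Equiv.Perm (Fin n)) :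
    MeasurableSet {x : Fin n → ℝ | StrictMono (x ∘ σ)} := by
  have h : {x : Fin n → ℝ | StrictMono (x ∘ σ)}
      = ⋂ a, ⋂ b, {x : Fin n → ℝ | a < b → x (σ a) < x (σ b)} := by
    ext x
    simp only [Set.mem_setOf_eq, Set.mem_iInter]
    exact ⟨fun h a b hab => h hab, fun h a b hab => h a b hab⟩
  rw [h]
  refine MeasurableSet.iInter fun a => MeasurableSet.iInter fun b => ?_
  by_cases hab : a < b
  · have : {x : Fin n → ℝ | a < b → x (σ a) < x (σ b)} = {x | x (σ a) < x (σ b)} := by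
      ext x; simp [hab]
    rw [this]; exact measurableSet_lt (measurable_pi_apply _) (measurable_pi_apply _)
  · have : {x : Fin n → ℝ | a < b → x (σ a) < x (σ b)} = Set.univ := by ext x; simp [hab]
    rw [this]; exact MeasurableSet.univ

private lemma msp_A_meas (n : ℕ) (t : ℝ) (σ : Equiv.Perm (Fin n)) :
    MeasurableSet (mspA n t σ) :=
  (msp_Icc_meas n 1).inter ((msp_S_meas n t).inter (msp_mono_meas n σ))

private lemma msp_B_meas (n : ℕ) (c : ℝ) (σ : Equiv.Perm (Fin n)) :
    MeasurableSet (mspB n c σ) :=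
  (msp_Icc_meas n c).inter (msp_mono_meas n σ)

private lemma msp_A_disj (n : ℕ) (t : ℝ) : Pairwise (Function.onFun Disjoint (mspA n t)) := by
  intro σ τ hst
  rw [Function.onFun]
  refine Set.disjoint_left.mpr fun x hxσ hxτ => ?_
  exact hst (msp_perm_unique hxσ.2.2 hxτ.2.2)

private lemma msp_B_disj (n : ℕ) (c : ℝ) : Pairwise (Function.onFun Disjoint (mspB n c)) := by
  intro σ τ hst
  rw [Function.onFun]
  refine Set.disjoint_left.mpr fun x hxσ hxτ => ?_
  exact hst (msp_perm_unique hxσ.2 hxτ.2)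

private lemma msp_A_union (n : ℕ) {t : ℝ} (ht0 : 0 ≤ t) :
    {x : Fin n → ℝ | (∀ i, x i ∈ Icc (0:ℝ) 1) ∧ ∀ i j, i ≠ j → t < |x i - x j|}
      = ⋃ σ : Equiv.Perm (Fin n), mspA n t σ := by
  ext x
  constructor
  · rintro ⟨hIcc, hS⟩
    have hinj : Function.Injective x := by
      intro a b hab
      by_contra hne
      have := hS a b hne
      rw [hab, sub_self, abs_zero] at this
      linarith
    obtain ⟨σ, hσ⟩ := msp_exists_sort hinj
    exact Set.mem_iUnion.mpr ⟨σ, hIcc, hS, hσ⟩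
  · intro hx
    obtain ⟨σ, hIcc, hS, _⟩ := Set.mem_iUnion.mp hx
    exact ⟨hIcc, hS⟩

private lemma msp_B_union (n : ℕ) (c : ℝ) :
    {y : Fin n → ℝ | (∀ i, y i ∈ Icc (0:ℝ) c) ∧ Function.Injective y}
      = ⋃ σ : Equiv.Perm (Fin n), mspB n c σ := by
  ext y
  constructor
  · rintro ⟨hIcc, hinj⟩
    obtain ⟨σ, hσ⟩ := msp_exists_sort hinj
    exact Set.mem_iUnion.mpr ⟨σ, hIcc, hσ⟩
  · intro hy
    obtain ⟨σ, hIcc, hσ⟩ := Set.mem_iUnion.mp hy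
    refine ⟨hIcc, fun a b hab => ?_⟩
    have h1 : (y ∘ σ) (σ.symm a) = (y ∘ σ) (σ.symm b) := by
      simp [Function.comp, hab]
    have h2 := hσ.injective h1
    have := congrArg σ h2
    simpa using this

private lemma msp_translate {n : ℕ} (hn : 2 ≤ n) {t : ℝ} (ht0 : 0 ≤ t)
    (σ : Equiv.Perm (Fin n)) :
    mspA n t σ = (fun x : Fin n → ℝ => x - fun i => t * ((σ.symm i : ℕ) : ℝ)) ⁻¹'
      mspB n (1 - ((n:ℝ) - 1) * t) σ :=
  Set.ext fun x => msp_mem_iff hn ht0 σ x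

private lemma msp_volume_T (n : ℕ) (hn : 2 ≤ n) (t : ℝ) (ht0 : 0 ≤ t)
    (hc : 0 ≤ 1 - ((n:ℝ) - 1) * t) :
    (volume : Measure (Fin n → ℝ))
        {x | (∀ i, x i ∈ Icc (0:ℝ) 1) ∧ ∀ i j, i ≠ j → t < |x i - x j|}
      = ENNReal.ofReal ((1 - ((n:ℝ) - 1) * t) ^ n) := by
  set c : ℝ := 1 - ((n:ℝ) - 1) * t with hcdef
  rw [msp_A_union n ht0, measure_iUnion (msp_A_disj n t) (msp_A_meas n t)]
  have h1 : ∀ σ : Equiv.Perm (Fin n), volume (mspA n t σ) = volume (mspB n c σ) := by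
    intro σ
    rw [msp_translate hn ht0 σ]
    have h2 : (fun x : Fin n → ℝ => x - fun i => t * ((σ.symm i : ℕ) : ℝ))
        = fun x => x + (- fun i => t * ((σ.symm i : ℕ) : ℝ)) := by
      funext x; rw [sub_eq_add_neg]
    rw [h2, measure_preimage_add_right]
  rw [tsum_congr h1, ← measure_iUnion (msp_B_disj n c) (msp_B_meas n c), ← msp_B_union]
  have h3 : {y : Fin n → ℝ | (∀ i, y i ∈ Icc (0:ℝ) c) ∧ Function.Injective y}
      = {y : Fin n → ℝ | ∀ i, y i ∈ Icc (0:ℝ) c} ∩ {y | Function.Injective y} := rfl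
  have h4 : {y : Fin n → ℝ | Function.Injective y}ᶜ = {y | ¬ Function.Injective y} := by
    ext y; simp
  rw [h3, measure_inter_conull (by rw [h4]; exact msp_noninj_null n)]
  have h5 : {y : Fin n → ℝ | ∀ i, y i ∈ Icc (0:ℝ) c} = Set.pi Set.univ fun _ => Icc (0:ℝ) c := by
    ext y; simp [Set.mem_pi, Pi.le_def, forall_and]
  rw [h5, volume_pi_pi]
  simp only [Real.volume_Icc, sub_zero, Finset.prod_const, Finset.card_univ, Fintype.card_fin]
  rw [← ENNReal.ofReal_pow hc]

/-- **Distribution of the minimum spacing of a uniform sample.**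
Let `X 1, …, X n` (`n ≥ 2`) be i.i.d. uniform on `[0, 1]` and let
`L = min_{i ≠ j} |X i − X j|` be the minimum pairwise distance. Then for
`0 ≤ t ≤ 1/(n − 1)`, `P(L > t) = (1 − (n − 1)t)^n`. -/
theorem min_spacing_tail_uniform
    {Ω : Type*} [MeasurableSpace Ω] (μ : Measure Ω) [IsProbabilityMeasure μ]
    (n : ℕ) (hn : 2 ≤ n) (X : Fin n → Ω → ℝ)
    (hmeas : ∀ i, Measurable (X i))
    (hindep : iIndepFun X μ)
    (hunif : ∀ i, Measure.map (X i) μ = volume.restrict (Set.Icc (0 : ℝ) 1))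
    (t : ℝ) (ht0 : 0 ≤ t) (ht1 : t ≤ 1 / ((n : ℝ) - 1)) :
    μ {ω | ∀ i j : Fin n, i ≠ j → t < |X i ω - X j ω|}
      = ENNReal.ofReal ((1 - ((n : ℝ) - 1) * t) ^ n) := by
  have hn1 : (1:ℝ) ≤ (n:ℝ) - 1 := by
    have : (2:ℝ) ≤ (n:ℝ) := by exact_mod_cast hn
    linarith
  have hc : 0 ≤ 1 - ((n:ℝ) - 1) * t := by
    have h2 : ((n:ℝ) - 1) * t ≤ ((n:ℝ) - 1) * (1 / ((n:ℝ) - 1)) :=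
      mul_le_mul_of_nonneg_left ht1 (by linarith)
    rw [mul_one_div, div_self (by linarith : (n:ℝ) - 1 ≠ 0)] at h2
    linarith
  have hJ : Measurable (fun ω (i : Fin n) => X i ω) := measurable_pi_lambda _ hmeas
  have hSm := msp_S_meas n t
  have hev : {ω | ∀ i j : Fin n, i ≠ j → t < |X i ω - X j ω|}
      = (fun ω (i : Fin n) => X i ω) ⁻¹' {x | ∀ i j, i ≠ j → t < |x i - x j|} := rfl
  rw [hev, ← Measure.map_apply hJ hSm, msp_joint μ n X hmeas hindep hunif,
    msp_pi_restrict n, Measure.restrict_apply hSm]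
  have hTT : {x : Fin n → ℝ | ∀ i j, i ≠ j → t < |x i - x j|}
        ∩ (Set.pi Set.univ fun _ => Set.Icc (0:ℝ) 1)
      = {x | (∀ i, x i ∈ Icc (0:ℝ) 1) ∧ ∀ i j, i ≠ j → t < |x i - x j|} := by
    ext x
    simp only [Set.mem_inter_iff, Set.mem_setOf_eq, Set.mem_pi, Set.mem_univ, true_implies]
    tauto
  rw [hTT, msp_volume_T n hn t ht0 hc]
end

section
/- Let n ≥ 2 be an integer and X_1, …, X_n be i.i.d. random variables uniformly distributed on [0, 1]. Let L = min_{1 ≤ i < j ≤ n} |X_i − X_j| be the minimum pairwise distance. Then E[L] = 1/(n² − 1). -/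
open MeasureTheory ProbabilityTheory Set

namespace MinSpacing

variable {n : ℕ}

noncomputable def L (n : ℕ) (x : Fin n → ℝ) : ℝ :=
  ⨅ p : {p : Fin n × Fin n // p.1 ≠ p.2}, |x p.1.1 - x p.1.2|

lemma pair_nonempty (hn : 2 ≤ n) : Nonempty {p : Fin n × Fin n // p.1 ≠ p.2} := by
  refine ⟨⟨(⟨0, by omega⟩, ⟨1, by omega⟩), ?_⟩⟩
  simp [Fin.ext_iff]

lemma lt_L_iff (hn : 2 ≤ n) (x : Fin n → ℝ) (t : ℝ) :
    t < L n x ↔ ∀ i j : Fin n, i ≠ j → t < |x i - x j| := by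
  have : Nonempty {p : Fin n × Fin n // p.1 ≠ p.2} := pair_nonempty hn
  rw [L, ← Finset.inf'_univ_eq_ciInf]
  rw [Finset.lt_inf'_iff]
  constructor
  · intro h i j hij
    exact h ⟨(i, j), hij⟩ (Finset.mem_univ _)
  · intro h p _
    exact h p.1.1 p.1.2 p.2

lemma L_nonneg (hn : 2 ≤ n) (x : Fin n → ℝ) : 0 ≤ L n x := by
  have : Nonempty {p : Fin n × Fin n // p.1 ≠ p.2} := pair_nonempty hn
  exact le_ciInf fun p => abs_nonneg _

lemma measurable_L : Measurable (L n) := by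
  apply Measurable.iInf
  intro p
  exact ((measurable_pi_apply p.1.1).sub (measurable_pi_apply p.1.2)).abs

variable {n : ℕ}

lemma hplane_null (i j : Fin n) (hij : i ≠ j) :
    volume {x : Fin n → ℝ | x i = x j} = 0 := by
  classical
  have hmp := MeasureTheory.volume_preserving_piEquivPiSubtypeProd
    (fun _ : Fin n => ℝ) (fun k => k = i)
  set e := MeasurableEquiv.piEquivPiSubtypeProd (fun _ : Fin n => ℝ) (fun k => k = i)
  set s : Set ((({k : Fin n // k = i}) → ℝ) × (({k : Fin n // ¬ k = i}) → ℝ)) :=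
    {q | q.1 ⟨i, rfl⟩ = q.2 ⟨j, fun h => hij h.symm⟩} with hs
  have hsm : MeasurableSet s := by
    apply measurableSet_eq_fun <;> fun_prop
  have h1 : {x : Fin n → ℝ | x i = x j} = e ⁻¹' s := by
    ext x; simp [e, s, MeasurableEquiv.piEquivPiSubtypeProd]
  rw [h1, hmp.measure_preimage hsm.nullMeasurableSet]
  rw [Measure.volume_eq_prod]
  rw [MeasureTheory.Measure.measure_prod_null hsm]
  refine Filter.Eventually.of_forall fun a => ?_
  show volume (Prod.mk a ⁻¹' s) = 0
  have : (Prod.mk a ⁻¹' s) = {b : ({k : Fin n // ¬ k = i}) → ℝ |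
      b ⟨j, fun h => hij h.symm⟩ = a ⟨i, rfl⟩} := by
    ext b; simp [s]; exact eq_comm
  rw [this]
  rw [MeasureTheory.volume_pi]
  exact MeasureTheory.Measure.pi_hyperplane _ _ _

lemma noninj_null :
    volume {x : Fin n → ℝ | ¬ Function.Injective x} = 0 := by
  classical
  have : {x : Fin n → ℝ | ¬ Function.Injective x} ⊆
      ⋃ (i : Fin n) (j : Fin n) (_ : i ≠ j), {x : Fin n → ℝ | x i = x j} := by
    intro x hx
    simp only [Function.Injective, not_forall] at hx
    obtain ⟨i, j, hxij, hij⟩ := hx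
    exact mem_iUnion.2 ⟨i, mem_iUnion.2 ⟨j, mem_iUnion.2 ⟨hij, hxij⟩⟩⟩
  refine measure_mono_null this ?_
  refine measure_iUnion_null fun i => measure_iUnion_null fun j => measure_iUnion_null fun hij =>
    hplane_null i j hij

lemma perm_preserving (σ : Equiv.Perm (Fin n)) :
    MeasurePreserving (fun x : Fin n → ℝ => x ∘ σ) volume volume := by
  have h := MeasureTheory.volume_measurePreserving_piCongrLeft (fun _ : Fin n => ℝ) σ.symm
  convert h using 1
  ext x i
  have h2 := MeasurableEquiv.piCongrLeft_apply_apply (β := fun _ : Fin n => ℝ) σ.symm x (σ i)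
  simp only [Equiv.symm_apply_apply] at h2
  exact h2.symm


variable {n : ℕ}

lemma sort_unique {x : Fin n → ℝ} {σ τ : Equiv.Perm (Fin n)}
    (hσ : StrictMono (x ∘ σ)) (hτ : StrictMono (x ∘ τ)) : σ = τ := by
  have hinj : Function.Injective x := by
    have h : x = (x ∘ σ) ∘ σ.symm := by ext i; simp
    rw [h]; exact hσ.injective.comp σ.symm.injective
  have h := Tuple.unique_monotone (f := x) (σ := σ) (τ := τ) hσ.monotone hτ.monotone
  ext i
  exact congrArg Fin.val (hinj (congrFun h i))

lemma measurableSet_strictMono : MeasurableSet {x : Fin n → ℝ | StrictMono x} := by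
  have : {x : Fin n → ℝ | StrictMono x}
      = ⋂ (p : Fin n × Fin n) (_ : p.1 < p.2), {x : Fin n → ℝ | x p.1 < x p.2} := by
    ext x
    simp only [mem_iInter, mem_setOf_eq]
    exact ⟨fun h p hp => h hp, fun h a b hab => h (a, b) hab⟩
  rw [this]
  exact MeasurableSet.iInter fun p => MeasurableSet.iInter fun _ =>
    measurableSet_lt (measurable_pi_apply _) (measurable_pi_apply _)

lemma symmetrization {S : Set (Fin n → ℝ)} (hS : MeasurableSet S)
    (hinv : ∀ σ : Equiv.Perm (Fin n), ∀ x ∈ S, x ∘ σ ∈ S) :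
    volume S = (n.factorial : ENNReal) * volume (S ∩ {x | StrictMono x}) := by
  classical
  set M : Set (Fin n → ℝ) := {x | StrictMono x} with hMdef
  set B : Equiv.Perm (Fin n) → Set (Fin n → ℝ) :=
    fun σ => S ∩ {x | StrictMono (x ∘ σ)} with hBdef
  have hpre : ∀ σ : Equiv.Perm (Fin n), (fun x : Fin n → ℝ => x ∘ σ) ⁻¹' (S ∩ M) = B σ := by
    intro σ
    ext x
    simp only [mem_preimage, mem_inter_iff, hBdef, hMdef, mem_setOf_eq]
    refine and_congr_left fun _ => ⟨fun h => ?_, fun h => hinv σ x h⟩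
    have h2 := hinv σ⁻¹ _ h
    have h3 : (x ∘ ⇑σ) ∘ ⇑σ⁻¹ = x := by ext i; simp
    rwa [h3] at h2
  have hBmeas : ∀ σ, MeasurableSet (B σ) := fun σ =>
    hS.inter ((perm_preserving σ).measurable measurableSet_strictMono)
  have hBvol : ∀ σ, volume (B σ) = volume (S ∩ M) := fun σ => by
    rw [← hpre σ]
    exact (perm_preserving σ).measure_preimage
      (hS.inter measurableSet_strictMono).nullMeasurableSet
  have hdisj : Pairwise (Function.onFun Disjoint B) := by
    intro σ τ hst
    rw [Function.onFun, Set.disjoint_left]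
    rintro x ⟨-, hxσ⟩ ⟨-, hxτ⟩
    exact hst (sort_unique hxσ hxτ)
  have hcover : S ⊆ (⋃ σ, B σ) ∪ {x | ¬ Function.Injective x} := by
    intro x hx
    by_cases hxi : Function.Injective x
    · left
      refine mem_iUnion.2 ⟨Tuple.sort x, hx, ?_⟩
      exact (Tuple.monotone_sort x).strictMono_of_injective
        (hxi.comp (Tuple.sort x).injective)
    · exact Or.inr hxi
  have hsub : (⋃ σ, B σ) ⊆ S := iUnion_subset fun σ => inter_subset_left
  have hvol : volume S = volume (⋃ σ, B σ) := by
    refine le_antisymm ?_ (measure_mono hsub)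
    calc volume S ≤ volume ((⋃ σ, B σ) ∪ {x | ¬ Function.Injective x}) := measure_mono hcover
    _ ≤ volume (⋃ σ, B σ) + volume {x : Fin n → ℝ | ¬ Function.Injective x} := measure_union_le _ _
    _ = volume (⋃ σ, B σ) := by rw [noninj_null, add_zero]
  rw [hvol, measure_iUnion hdisj hBmeas]
  simp only [hBvol]
  rw [tsum_fintype, Finset.sum_const, nsmul_eq_mul]
  congr 1
  simp [Fintype.card_perm]

variable {n : ℕ}

def cube (n : ℕ) (s : ℝ) : Set (Fin n → ℝ) := {x | ∀ i, x i ∈ Icc 0 s}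

def A (n : ℕ) (t : ℝ) : Set (Fin n → ℝ) :=
  {x | (∀ i, x i ∈ Icc (0:ℝ) 1) ∧ ∀ i j, i ≠ j → t < |x i - x j|}

lemma cube_eq (s : ℝ) : cube n s = Set.pi univ (fun _ : Fin n => Icc 0 s) := by
  ext x; simp [cube, Set.mem_univ_pi, Pi.le_def, forall_and]

lemma cube_meas (s : ℝ) : MeasurableSet (cube n s) := by
  rw [cube_eq]; exact MeasurableSet.univ_pi fun _ => measurableSet_Icc

lemma cube_vol (s : ℝ) : volume (cube n s) = ENNReal.ofReal s ^ n := by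
  rw [cube_eq, volume_pi_pi]
  simp [Real.volume_Icc]

lemma cube_inv (s : ℝ) (σ : Equiv.Perm (Fin n)) (x : Fin n → ℝ) (hx : x ∈ cube n s) :
    x ∘ σ ∈ cube n s := fun i => hx (σ i)

lemma A_meas (t : ℝ) : MeasurableSet (A n t) := by
  have : A n t = (⋂ i, {x : Fin n → ℝ | x i ∈ Icc (0:ℝ) 1}) ∩
      ⋂ (i) (j) (_ : i ≠ j), {x : Fin n → ℝ | t < |x i - x j|} := by
    ext x; simp [A]
  rw [this]
  apply MeasurableSet.inter
  · exact MeasurableSet.iInter fun i => (measurable_pi_apply i) measurableSet_Icc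
  · refine MeasurableSet.iInter fun i => MeasurableSet.iInter fun j =>
      MeasurableSet.iInter fun _ => ?_
    exact measurableSet_lt measurable_const
      (((measurable_pi_apply i).sub (measurable_pi_apply j)).abs)

lemma A_inv (t : ℝ) (σ : Equiv.Perm (Fin n)) (x : Fin n → ℝ) (hx : x ∈ A n t) :
    x ∘ σ ∈ A n t := by
  obtain ⟨h1, h2⟩ := hx
  exact ⟨fun i => h1 (σ i), fun i j hij => h2 (σ i) (σ j) (fun h => hij (σ.injective h))⟩

lemma shear (hn : 2 ≤ n) {t : ℝ} (ht : 0 < t) :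
    A n t ∩ {x | StrictMono x} =
      (fun x : Fin n → ℝ => x - fun i : Fin n => (i : ℕ) * t) ⁻¹'
        (cube n (1 - (n - 1) * t) ∩ {x | StrictMono x}) := by
  obtain ⟨m, rfl⟩ : ∃ m, n = m + 1 := ⟨n - 1, by omega⟩
  set s : ℝ := 1 - (m + 1 - 1) * t with hs
  ext x
  simp only [mem_inter_iff, mem_preimage, mem_setOf_eq, A, cube, Pi.sub_apply]
  constructor
  · rintro ⟨⟨hbox, hpair⟩, hmono⟩
    have hymono : StrictMono (fun i : Fin (m+1) => x i - (i : ℕ) * t) := by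
      rw [Fin.strictMono_iff_lt_succ]
      intro i
      have hne : (i.castSucc : Fin (m+1)) ≠ i.succ := (Fin.castSucc_lt_succ : i.castSucc < i.succ).ne
      have h2 := hpair i.castSucc i.succ hne
      have h3 : x i.castSucc < x i.succ := hmono (Fin.castSucc_lt_succ : i.castSucc < i.succ)
      rw [abs_sub_comm, abs_of_pos (by linarith)] at h2
      have hc : ((i.castSucc : Fin (m+1)) : ℕ) = (i : ℕ) := rfl
      have hsucc : ((i.succ : Fin (m+1)) : ℕ) = (i : ℕ) + 1 := rfl
      rw [hc, hsucc]
      push_cast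
      linarith
    refine ⟨fun i => ⟨?_, ?_⟩, hymono⟩
    · have h0 : (0 : Fin (m+1)) ≤ i := Fin.zero_le i
      have h1 := hymono.monotone h0
      have hx0 : (0:ℝ) ≤ x 0 := (hbox _).1
      simp only [Fin.val_zero, Nat.cast_zero, zero_mul, sub_zero] at h1
      linarith
    · have hlast : i ≤ (⟨m, by omega⟩ : Fin (m+1)) := by
        rw [Fin.le_def]; exact Nat.lt_succ_iff.mp i.isLt
      have := hymono.monotone hlast
      simp only at this
      have hx1 : x ⟨m, by omega⟩ ≤ 1 := (hbox _).2
      have h2 : x i - (i:ℕ) * t ≤ x ⟨m, by omega⟩ - m * t := this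
      push_cast
      linarith
  · rintro ⟨hcube, hymono⟩
    have key : ∀ i j : Fin (m+1), i < j → t < x j - x i := by
      intro i j hij
      have h1 : x i - (i:ℕ)*t < x j - (j:ℕ)*t := hymono hij
      have h2 : (i:ℕ) + 1 ≤ (j:ℕ) := hij
      have h3 : ((i:ℕ):ℝ) + 1 ≤ ((j:ℕ):ℝ) := by exact_mod_cast h2
      nlinarith
    have hmono : StrictMono x := fun i j hij => by nlinarith [key i j hij, ht]
    refine ⟨⟨fun i => ⟨?_, ?_⟩, fun i j hij => ?_⟩, hmono⟩
    · have := (hcube i).1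
      have hnn : (0:ℝ) ≤ (i:ℕ) * t := by positivity
      linarith
    · have h4 := (hcube i).2
      have hi : ((i:ℕ):ℝ) ≤ m := by exact_mod_cast Nat.lt_succ_iff.mp i.isLt
      push_cast at h4
      nlinarith
    · rcases Ne.lt_or_gt hij with h | h
      · rw [abs_sub_comm, abs_of_pos (by linarith [key i j h])]
        exact key i j h
      · rw [abs_of_pos (by linarith [key j i h])]
        exact key j i h

lemma vol_A (hn : 2 ≤ n) {t : ℝ} (ht : 0 < t) :
    volume (A n t) = ENNReal.ofReal (1 - (n - 1) * t) ^ n := by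
  set s : ℝ := 1 - (n - 1) * t with hs
  have h1 := symmetrization (S := A n t) (A_meas t) (A_inv t)
  have h2 := symmetrization (S := cube n s) (cube_meas (n := n) s) (cube_inv s)
  rw [h1, shear hn ht]
  have h3 : volume ((fun x : Fin n → ℝ => x - fun i : Fin n => (i : ℕ) * t) ⁻¹'
      (cube n s ∩ {x | StrictMono x})) = volume (cube n s ∩ {x | StrictMono x}) := by
    have : (fun x : Fin n → ℝ => x - fun i : Fin n => (i : ℕ) * t)
        = (fun x : Fin n → ℝ => (-fun i : Fin n => (i : ℕ) * t) + x) := by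
      ext x i; simp; ring
    rw [this]
    exact measure_preimage_add volume _ _
  rw [h3, ← h2, cube_vol]

variable {n : ℕ}

lemma map_joint_eq_pi {Ω : Type*} [MeasurableSpace Ω] (μ : Measure Ω) [IsProbabilityMeasure μ]
    (X : Fin n → Ω → ℝ) (hmeas : ∀ i, Measurable (X i))
    (hindep : iIndepFun X μ)
    (hunif : ∀ i, Measure.map (X i) μ = volume.restrict (Icc (0:ℝ) 1)) :
    Measure.map (fun ω i => X i ω) μ
      = Measure.pi (fun _ : Fin n => volume.restrict (Icc (0:ℝ) 1)) := by
  have hJ : Measurable (fun ω i => X i ω) := measurable_pi_lambda _ hmeas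
  refine (Measure.pi_eq (μ := fun _ : Fin n => volume.restrict (Icc (0:ℝ) 1)) fun s hs => ?_).symm
  rw [Measure.map_apply hJ (MeasurableSet.univ_pi hs)]
  have h1 : (fun ω i => X i ω) ⁻¹' Set.pi univ s = ⋂ i ∈ Finset.univ, X i ⁻¹' s i := by
    ext ω; simp [Set.mem_univ_pi]
  rw [h1, hindep.measure_inter_preimage_eq_mul Finset.univ (fun i _ => hs i)]
  refine Finset.prod_congr rfl fun i _ => ?_
  rw [← Measure.map_apply (hmeas i) (hs i), hunif i]

lemma pi_restrict : Measure.pi (fun _ : Fin n => volume.restrict (Icc (0:ℝ) 1))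
    = (volume : Measure (Fin n → ℝ)).restrict (cube n 1) := by
  refine Measure.pi_eq (μ := fun _ : Fin n => volume.restrict (Icc (0:ℝ) 1)) fun s hs => ?_
  rw [Measure.restrict_apply (MeasurableSet.univ_pi hs), cube_eq, ← Set.pi_inter_distrib,
    volume_pi_pi]
  refine Finset.prod_congr rfl fun i _ => ?_
  rw [Measure.restrict_apply (hs i)]

lemma lint_aux (hn : 2 ≤ n) :
    ∫⁻ t in Ioi (0:ℝ), ENNReal.ofReal (1 - ((n:ℝ) - 1) * t) ^ n
      = ENNReal.ofReal (1 / ((n:ℝ)^2 - 1)) := by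
  set a : ℝ := (n:ℝ) - 1 with ha
  have ha0 : 0 < a := by
    have : (2:ℝ) ≤ n := by exact_mod_cast hn
    rw [ha]; linarith
  set c : ℝ := 1 / a with hc
  have hc0 : 0 < c := by positivity
  have hsplit : Ioi (0:ℝ) = Ioc 0 c ∪ Ioi c := (Set.Ioc_union_Ioi_eq_Ioi hc0.le).symm
  rw [hsplit, lintegral_union measurableSet_Ioi Set.Ioc_disjoint_Ioi_same]
  have h2 : ∫⁻ t in Ioi c, ENNReal.ofReal (1 - a * t) ^ n = 0 := by
    rw [setLIntegral_congr_fun measurableSet_Ioi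
      (fun t (ht : c < t) => ?_), lintegral_zero]
    have h3 : 1 - a * t < 0 := by
      rw [hc] at ht
      have := (div_lt_iff₀ ha0).mp ht
      nlinarith
    rw [ENNReal.ofReal_eq_zero.mpr h3.le]
    exact zero_pow (by omega)
  have h1 : ∫⁻ t in Ioc 0 c, ENNReal.ofReal (1 - a * t) ^ n
      = ENNReal.ofReal (1 / (a * ((n:ℝ) + 1))) := by
    have heq : ∀ t ∈ Ioc (0:ℝ) c, ENNReal.ofReal (1 - a * t) ^ n
        = ENNReal.ofReal ((1 - a * t) ^ n) := by
      intro t ht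
      have h4 : 0 ≤ 1 - a * t := by
        have h5 : a * t ≤ a * c := by nlinarith [ht.2, ha0]
        have h6 : a * c = 1 := by rw [hc]; field_simp
        linarith
      rw [ENNReal.ofReal_pow h4]
    rw [setLIntegral_congr_fun measurableSet_Ioc heq]
    have hcont : Continuous (fun t : ℝ => (1 - a * t) ^ n) := by continuity
    have hint : IntegrableOn (fun t : ℝ => (1 - a * t) ^ n) (Ioc 0 c) := by
      exact hcont.integrableOn_Ioc
    have hnn : 0 ≤ᵐ[volume.restrict (Ioc 0 c)] (fun t : ℝ => (1 - a * t) ^ n) := by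
      refine (ae_restrict_iff' measurableSet_Ioc).mpr (ae_of_all _ fun t ht => ?_)
      have h5 : a * t ≤ a * c := by nlinarith [ht.2, ha0]
      have h6 : a * c = 1 := by rw [hc]; field_simp
      exact pow_nonneg (by linarith) n
    rw [← MeasureTheory.ofReal_integral_eq_lintegral_ofReal hint hnn]
    congr 1
    rw [← intervalIntegral.integral_of_le hc0.le]
    have hderiv : ∀ t ∈ Set.uIcc (0:ℝ) c,
        HasDerivAt (fun u : ℝ => -(1 - a*u)^(n+1) / (a*((n:ℝ)+1))) ((1 - a*t)^n) t := by
      intro t _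
      have hb : HasDerivAt (fun u : ℝ => 1 - a * u) (-a) t := by
        simpa using ((hasDerivAt_id t).const_mul a).const_sub (1:ℝ)
      have hp := (hb.pow (n+1)).neg.div_const (a*((n:ℝ)+1))
      refine hp.congr_deriv ?_
      have hn1 : ((n:ℝ)+1) ≠ 0 := by positivity
      have ha1 : a ≠ 0 := ha0.ne'
      rw [div_eq_iff (mul_ne_zero ha1 hn1)]
      simp only [Nat.add_sub_cancel]
      push_cast
      ring
    rw [intervalIntegral.integral_eq_sub_of_hasDerivAt hderiv
      (hcont.intervalIntegrable 0 c)]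
    have h7 : 1 - a * c = 0 := by rw [hc]; field_simp; ring
    rw [h7]
    simp only [mul_zero, zero_pow, neg_zero, zero_div]
    rw [zero_pow (by omega : n + 1 ≠ 0)]
    field_simp
    norm_num
  rw [h1, h2, add_zero]
  congr 1
  rw [ha]
  have h8 : ((n:ℝ) - 1) * ((n:ℝ) + 1) = (n:ℝ)^2 - 1 := by ring
  rw [h8]

end MinSpacing

open MinSpacing

/-- **Expected minimum spacing of a uniform sample.**
Let `X 1, …, X n` (`n ≥ 2`) be i.i.d. uniform on `[0, 1]` and let
`L = min_{i ≠ j} |X i − X j|` be the minimum pairwise distance. Then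
`E[L] = 1/(n² − 1)`. -/
theorem expected_min_spacing_uniform
    {Ω : Type*} [MeasurableSpace Ω] (μ : Measure Ω) [IsProbabilityMeasure μ]
    (n : ℕ) (hn : 2 ≤ n) (X : Fin n → Ω → ℝ)
    (hmeas : ∀ i, Measurable (X i))
    (hindep : iIndepFun X μ)
    (hunif : ∀ i, Measure.map (X i) μ = volume.restrict (Set.Icc (0 : ℝ) 1)) :
    ∫ ω, (⨅ p : {p : Fin n × Fin n // p.1 ≠ p.2}, |X p.1.1 ω - X p.1.2 ω|) ∂μ
      = 1 / ((n : ℝ) ^ 2 - 1) := by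
  classical
  have hne : Nonempty {p : Fin n × Fin n // p.1 ≠ p.2} := pair_nonempty hn
  set ν : Measure (Fin n → ℝ) := (volume : Measure (Fin n → ℝ)).restrict (cube n 1) with hν
  have hmap : Measure.map (fun ω i => X i ω) μ = ν := by
    rw [map_joint_eq_pi μ X hmeas hindep hunif, pi_restrict]
  have hJ : Measurable (fun ω i => X i ω) := measurable_pi_lambda _ hmeas
  have h0 : ∫ ω, (⨅ p : {p : Fin n × Fin n // p.1 ≠ p.2}, |X p.1.1 ω - X p.1.2 ω|) ∂μ
      = ∫ x, L n x ∂ν := by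
    rw [← hmap, integral_map hJ.aemeasurable measurable_L.aestronglyMeasurable]
    rfl
  have h1 : ∫ x, L n x ∂ν = (∫⁻ x, ENNReal.ofReal (L n x) ∂ν).toReal :=
    integral_eq_lintegral_of_nonneg_ae (Filter.Eventually.of_forall (L_nonneg hn))
      measurable_L.aestronglyMeasurable
  have h2 : ∫⁻ x, ENNReal.ofReal (L n x) ∂ν = ∫⁻ t in Set.Ioi 0, ν {x | t < L n x} :=
    lintegral_eq_lintegral_meas_lt ν (Filter.Eventually.of_forall (L_nonneg hn))
      measurable_L.aemeasurable
  have h3 : ∫⁻ t in Set.Ioi (0:ℝ), ν {x | t < L n x}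
      = ∫⁻ t in Set.Ioi (0:ℝ), ENNReal.ofReal (1 - ((n:ℝ) - 1) * t) ^ n := by
    refine setLIntegral_congr_fun measurableSet_Ioi ?_
    intro t ht
    beta_reduce
    rw [hν, Measure.restrict_apply (measurableSet_lt measurable_const measurable_L)]
    have hAe : {x | t < L n x} ∩ cube n 1 = A n t := by
      ext x
      simp only [Set.mem_inter_iff, Set.mem_setOf_eq, lt_L_iff hn, cube, A]
      tauto
    rw [hAe, vol_A hn ht]
  have hnn : (0:ℝ) ≤ 1 / ((n : ℝ) ^ 2 - 1) := by
    have h4 : (2:ℝ) ≤ (n:ℝ) := by exact_mod_cast hn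
    have : (0:ℝ) < (n:ℝ)^2 - 1 := by nlinarith
    positivity
  rw [h0, h1, h2, h3, lint_aux hn, ENNReal.toReal_ofReal hnn]
end

section
/- There exists a universal constant C > 0 such that the following holds for every integer n > 3. Let X_1, …, X_n be i.i.d. random variables uniformly distributed on [0, 1], let X_{(1)} ≤ … ≤ X_{(n)} be their order statistics, and set U = max_{1 ≤ i ≤ n−1} (X_{(i+1)} − X_{(i)}) and L = min_{1 ≤ i ≤ n−1} (X_{(i+1)} − X_{(i)}). Then P(U/L ≥ √n / 2) ≥ 1 − C·n^{−1/2}; that is, with probability 1 − O(n^{−1/2}) the density factor κ = U/L of a uniform sample is at least √n / 2. -/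
open MeasureTheory ProbabilityTheory

open Set ENNReal

/-- The maximum spacing between consecutive entries of a list (intended for a sorted
list of sampled values): the maximum of the consecutive differences, `0` if there are
fewer than two entries. -/
noncomputable def maxSpacing (l : List ℝ) : ℝ :=
  (List.zipWith (fun a b => b - a) l l.tail).foldr max 0

noncomputable def unif : Measure ℝ := volume.restrict (Set.Icc (0:ℝ) 1)

instance : IsProbabilityMeasure unif := by
  constructor; simp [unif, Real.volume_Icc]

lemma pi_snoc_apply (m : ℕ) (A : Set (Fin (m+1) → ℝ)) (hA : MeasurableSet A) :
    Measure.pi (fun _ : Fin (m+1) => unif) A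
      = ∫⁻ x : Fin m → ℝ, unif {y : ℝ | Fin.snoc x y ∈ A} ∂ Measure.pi (fun _ : Fin m => unif) := by
  have hmp := (measurePreserving_piFinSuccAbove (fun _ : Fin (m+1) => unif) (Fin.last m))
  have h1 : Measure.pi (fun _ : Fin (m+1) => unif) A
      = (unif.prod (Measure.pi fun _ : Fin m => unif))
          ((MeasurableEquiv.piFinSuccAbove (fun _ => ℝ) (Fin.last m)).symm ⁻¹' A) := by
    rw [← (hmp.symm (MeasurableEquiv.piFinSuccAbove (fun _ => ℝ) (Fin.last m))).measure_preimage
      hA.nullMeasurableSet]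
  rw [h1, Measure.prod_apply_symm]
  · congr 1
    ext x
    congr 1
    ext y
    simp [MeasurableEquiv.piFinSuccAbove, Fin.insertNthEquiv]
  · exact (MeasurableEquiv.piFinSuccAbove (fun _ => ℝ) (Fin.last m)).symm.measurable hA

/-- separation event -/
def SepEv (m : ℕ) (t : ℝ) : Set (Fin m → ℝ) :=
  {x | (∀ k, x k ∈ Icc (0:ℝ) 1) ∧ ∀ i j : Fin m, i ≠ j → t < |x i - x j|}

lemma measurableSet_SepEv (m : ℕ) (t : ℝ) : MeasurableSet (SepEv m t) := by
  have : SepEv m t = (⋂ k, (fun x : Fin m → ℝ => x k) ⁻¹' Icc 0 1) ∩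
      ⋂ i, ⋂ j, ⋂ (_ : i ≠ j), (fun x : Fin m → ℝ => |x i - x j|) ⁻¹' Ioi t := by
    ext x; simp [SepEv]
  rw [this]
  exact (MeasurableSet.iInter fun k => (measurable_pi_apply k) measurableSet_Icc).inter
    (MeasurableSet.iInter fun i => MeasurableSet.iInter fun j => MeasurableSet.iInter fun _ =>
      (((measurable_pi_apply i).sub (measurable_pi_apply j)).abs) measurableSet_Ioi)

/-- one-dimensional avoidance bound -/
lemma unif_avoid {m : ℕ} {t : ℝ} (ht : 0 < t) (ht1 : t ≤ 1) (x : Fin m → ℝ)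
    (hx : ∀ k, x k ∈ Icc (0:ℝ) 1) (hsep : ∀ i j : Fin m, i ≠ j → t < |x i - x j|) :
    unif {y : ℝ | ∀ k, t < |y - x k|} + ENNReal.ofReal (m * (t/2)) ≤ 1 := by
  set J : Fin m → Set ℝ := fun k => Icc (x k - t/2) (x k + t/2) with hJ
  have hJm : ∀ k, ENNReal.ofReal (t/2) ≤ unif (J k) := by
    intro k
    obtain ⟨hk0, hk1⟩ := hx k
    rcases le_or_gt (x k + t/2) 1 with h | h
    · have hsub : Icc (x k) (x k + t/2) ⊆ J k ∩ Icc 0 1 := fun z hz =>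
        ⟨⟨by linarith [hz.1], hz.2⟩, by linarith [hz.1], le_trans hz.2 h⟩
      calc ENNReal.ofReal (t/2) = volume (Icc (x k) (x k + t/2)) := by
            rw [Real.volume_Icc]; ring_nf
          _ ≤ volume (J k ∩ Icc 0 1) := measure_mono hsub
          _ = unif (J k) := by
            rw [unif, Measure.restrict_apply measurableSet_Icc]
    · have hsub : Icc (x k - t/2) (x k) ⊆ J k ∩ Icc 0 1 := fun z hz =>
        ⟨⟨hz.1, by linarith [hz.2]⟩, by nlinarith [hz.1], le_trans hz.2 hk1⟩
      calc ENNReal.ofReal (t/2) = volume (Icc (x k - t/2) (x k)) := by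
            rw [Real.volume_Icc]; ring_nf
          _ ≤ volume (J k ∩ Icc 0 1) := measure_mono hsub
          _ = unif (J k) := by
            rw [unif, Measure.restrict_apply measurableSet_Icc]
  have hdisj : Pairwise (Function.onFun Disjoint J) := by
    intro k l hkl
    rw [Function.onFun, Set.disjoint_left]
    intro z hzk hzl
    have := hsep k l hkl
    have h1 : |x k - x l| ≤ t := by
      rw [abs_le]
      constructor
      · have := hzk.1; have := hzk.2; have := hzl.1; have := hzl.2; linarith
      · have := hzk.1; have := hzk.2; have := hzl.1; have := hzl.2; linarith
    linarith [this]
  have hUnion : ENNReal.ofReal (m * (t/2)) ≤ unif (⋃ k, J k) := by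
    rw [measure_iUnion hdisj (fun k => measurableSet_Icc)]
    calc ENNReal.ofReal (m * (t/2)) = ∑ k : Fin m, ENNReal.ofReal (t/2) := by
          rw [Finset.sum_const, Finset.card_univ, Fintype.card_fin, nsmul_eq_mul,
            ← ENNReal.ofReal_natCast, ← ENNReal.ofReal_mul (by positivity)]
        _ ≤ ∑ k : Fin m, unif (J k) := Finset.sum_le_sum fun k _ => hJm k
        _ = ∑' k : Fin m, unif (J k) := (tsum_fintype _).symm
  have hdisj2 : Disjoint {y : ℝ | ∀ k, t < |y - x k|} (⋃ k, J k) := by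
    rw [Set.disjoint_left]
    intro y hy hyJ
    obtain ⟨k, hk⟩ := Set.mem_iUnion.mp hyJ
    have : |y - x k| ≤ t := by
      rw [abs_le]; exact ⟨by linarith [hk.1], by linarith [hk.2]⟩
    linarith [hy k]
  calc unif {y : ℝ | ∀ k, t < |y - x k|} + ENNReal.ofReal (m * (t/2))
      ≤ unif {y : ℝ | ∀ k, t < |y - x k|} + unif (⋃ k, J k) := by
        exact add_le_add_right hUnion _
    _ = unif ({y : ℝ | ∀ k, t < |y - x k|} ∪ ⋃ k, J k) :=
        (measure_union hdisj2 (MeasurableSet.iUnion fun k => measurableSet_Icc)).symm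
    _ ≤ unif univ := measure_mono (subset_univ _)
    _ = 1 := measure_univ

lemma sep_step (m : ℕ) {t : ℝ} (ht : 0 < t) (ht1 : t ≤ 1) :
    Measure.pi (fun _ : Fin (m+1) => unif) (SepEv (m+1) t)
      ≤ (1 - ENNReal.ofReal (m * (t/2))) * Measure.pi (fun _ : Fin m => unif) (SepEv m t) := by
  rw [pi_snoc_apply m _ (measurableSet_SepEv (m+1) t)]
  have hbound : ∀ x : Fin m → ℝ,
      unif {y : ℝ | Fin.snoc x y ∈ SepEv (m+1) t}
        ≤ (SepEv m t).indicator (fun _ => 1 - ENNReal.ofReal (m * (t/2))) x := by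
    intro x
    by_cases hx : x ∈ SepEv m t
    · rw [Set.indicator_of_mem hx]
      have hsub : {y : ℝ | Fin.snoc x y ∈ SepEv (m+1) t} ⊆ {y : ℝ | ∀ k, t < |y - x k|} := by
        intro y hy k
        have := hy.2 (Fin.last m) (Fin.castSucc k) (by
          simp [Fin.ext_iff]
          omega)
        simpa [Fin.snoc_last, Fin.snoc_castSucc] using this
      refine le_trans (measure_mono hsub) ?_
      exact ENNReal.le_sub_of_add_le_right ENNReal.ofReal_ne_top (unif_avoid ht ht1 x hx.1 hx.2)
    · rw [Set.indicator_of_notMem hx]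
      have : {y : ℝ | Fin.snoc x y ∈ SepEv (m+1) t} = ∅ := by
        ext y
        simp only [Set.mem_setOf_eq, Set.mem_empty_iff_false, iff_false]
        intro hy
        apply hx
        constructor
        · intro k
          have := hy.1 (Fin.castSucc k)
          simpa [Fin.snoc_castSucc] using this
        · intro i j hij
          have := hy.2 (Fin.castSucc i) (Fin.castSucc j) (by
            simpa [Fin.ext_iff] using (Fin.val_ne_iff.mpr hij))
          simpa [Fin.snoc_castSucc] using this
      rw [this, measure_empty]
  calc ∫⁻ x, unif {y : ℝ | Fin.snoc x y ∈ SepEv (m+1) t} ∂ Measure.pi (fun _ : Fin m => unif)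
      ≤ ∫⁻ x, (SepEv m t).indicator (fun _ => 1 - ENNReal.ofReal (m * (t/2))) x
          ∂ Measure.pi (fun _ : Fin m => unif) := lintegral_mono hbound
    _ = (1 - ENNReal.ofReal (m * (t/2))) * Measure.pi (fun _ : Fin m => unif) (SepEv m t) := by
        rw [lintegral_indicator_const (measurableSet_SepEv m t)]

lemma sep_bound (n : ℕ) {t : ℝ} (ht : 0 < t) (ht1 : t ≤ 1) :
    Measure.pi (fun _ : Fin n => unif) (SepEv n t)
      ≤ ENNReal.ofReal (Real.exp (-(t/2) * (∑ k ∈ Finset.range n, (k:ℝ)))) := by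
  have key : ∀ m : ℕ, Measure.pi (fun _ : Fin m => unif) (SepEv m t)
      ≤ ∏ k ∈ Finset.range m, ENNReal.ofReal (Real.exp (-(k * (t/2)))) := by
    intro m
    induction m with
    | zero => simpa using prob_le_one
    | succ m ih =>
      refine le_trans (sep_step m ht ht1) ?_
      rw [Finset.prod_range_succ, mul_comm]
      refine mul_le_mul' ih ?_
      have h1 : (1 : ℝ≥0∞) - ENNReal.ofReal (m * (t/2)) = ENNReal.ofReal (1 - m * (t/2)) := by
        rw [ENNReal.ofReal_sub _ (by positivity), ENNReal.ofReal_one]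
      rw [h1]
      exact ENNReal.ofReal_le_ofReal (by
        have := Real.add_one_le_exp (-(m * (t/2)))
        linarith)
  refine le_trans (key n) ?_
  rw [← ENNReal.ofReal_prod_of_nonneg (fun i _ => (Real.exp_pos _).le)]
  refine ENNReal.ofReal_le_ofReal ?_
  rw [← Real.exp_sum]
  apply le_of_eq
  congr 1
  rw [Finset.mul_sum]
  exact Finset.sum_congr rfl fun k _ => by ring

lemma col_null (m : ℕ) :
    Measure.pi (fun _ : Fin m => unif) {x : Fin m → ℝ | ∃ i j, i ≠ j ∧ x i = x j} = 0 := by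
  induction m with
  | zero =>
    have : {x : Fin 0 → ℝ | ∃ i j, i ≠ j ∧ x i = x j} = ∅ := by
      ext x; simp only [Set.mem_setOf_eq, Set.mem_empty_iff_false, iff_false]
      rintro ⟨i, _⟩; exact i.elim0
    rw [this, measure_empty]
  | succ m ih =>
    have hmeas : MeasurableSet {x : Fin (m+1) → ℝ | ∃ i j, i ≠ j ∧ x i = x j} := by
      have : {x : Fin (m+1) → ℝ | ∃ i j, i ≠ j ∧ x i = x j}
          = ⋃ i, ⋃ j, ⋃ (_ : i ≠ j), (fun x : Fin (m+1) → ℝ => x i - x j) ⁻¹' {0} := by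
        ext x; simp [sub_eq_zero]
      rw [this]
      exact MeasurableSet.iUnion fun i => MeasurableSet.iUnion fun j =>
        MeasurableSet.iUnion fun _ =>
          ((measurable_pi_apply i).sub (measurable_pi_apply j)) (measurableSet_singleton 0)
    rw [pi_snoc_apply m _ hmeas]
    refine le_antisymm ?_ zero_le
    have hbound : ∀ x : Fin m → ℝ,
        unif {y : ℝ | Fin.snoc x y ∈ {x : Fin (m+1) → ℝ | ∃ i j, i ≠ j ∧ x i = x j}}
          ≤ {x : Fin m → ℝ | ∃ i j, i ≠ j ∧ x i = x j}.indicator (fun _ => 1) x := by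
      intro x
      by_cases hx : x ∈ {x : Fin m → ℝ | ∃ i j, i ≠ j ∧ x i = x j}
      · rw [Set.indicator_of_mem hx]; exact prob_le_one
      · rw [Set.indicator_of_notMem hx]
        have hsub : {y : ℝ | Fin.snoc x y ∈ {x : Fin (m+1) → ℝ | ∃ i j, i ≠ j ∧ x i = x j}}
            ⊆ ⋃ k : Fin m, {x k} := by
          intro y hy
          obtain ⟨i, j, hij, hxy⟩ := hy
          rcases Fin.eq_castSucc_or_eq_last i with ⟨i', rfl⟩ | rfl
          · rcases Fin.eq_castSucc_or_eq_last j with ⟨j', rfl⟩ | rfl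
            · exact absurd ⟨i', j', fun h => hij (by rw [h]), by
                simpa [Fin.snoc_castSucc] using hxy⟩ hx
            · refine Set.mem_iUnion.mpr ⟨i', ?_⟩
              simp only [Fin.snoc_castSucc, Fin.snoc_last] at hxy
              simp [hxy.symm]
          · rcases Fin.eq_castSucc_or_eq_last j with ⟨j', rfl⟩ | rfl
            · refine Set.mem_iUnion.mpr ⟨j', ?_⟩
              simp only [Fin.snoc_castSucc, Fin.snoc_last] at hxy
              simp [hxy]
            · exact absurd rfl hij
        refine le_trans (measure_mono hsub) ?_
        refine le_of_eq (measure_iUnion_null fun k => ?_)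
        exact le_antisymm (le_trans (Measure.restrict_le_self _)
          (le_of_eq (Real.volume_singleton))) zero_le
    calc ∫⁻ x, unif {y : ℝ | Fin.snoc x y ∈ {x : Fin (m+1) → ℝ | ∃ i j, i ≠ j ∧ x i = x j}}
            ∂ Measure.pi (fun _ : Fin m => unif)
        ≤ ∫⁻ x, {x : Fin m → ℝ | ∃ i j, i ≠ j ∧ x i = x j}.indicator (fun _ => 1) x
            ∂ Measure.pi (fun _ : Fin m => unif) := lintegral_mono hbound
      _ = 0 := by
          have hm : MeasurableSet {x : Fin m → ℝ | ∃ i j, i ≠ j ∧ x i = x j} := by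
            have : {x : Fin m → ℝ | ∃ i j, i ≠ j ∧ x i = x j}
                = ⋃ i, ⋃ j, ⋃ (_ : i ≠ j), (fun x : Fin m → ℝ => x i - x j) ⁻¹' {0} := by
              ext x; simp [sub_eq_zero]
            rw [this]
            exact MeasurableSet.iUnion fun i => MeasurableSet.iUnion fun j =>
              MeasurableSet.iUnion fun _ =>
                ((measurable_pi_apply i).sub (measurable_pi_apply j)) (measurableSet_singleton 0)
          rw [lintegral_indicator_const hm, ih, mul_zero]

lemma maxSpacing_nonneg (l : List ℝ) : 0 ≤ maxSpacing l := by
  unfold maxSpacing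
  generalize (List.zipWith (fun a b => b - a) l l.tail) = xs
  induction xs with
  | nil => simp
  | cons a t ih => simpa using Or.inr ih

lemma maxSpacing_cons_cons (a b : ℝ) (t : List ℝ) :
    maxSpacing (a :: b :: t) = max (b - a) (maxSpacing (b :: t)) := rfl

lemma sub_le_maxSpacing : ∀ {l : List ℝ}, l.Pairwise (· ≤ ·) → ∀ {a b : ℝ}, a ∈ l → b ∈ l →
    b - a ≤ ((l.length : ℝ) - 1) * maxSpacing l := by
  intro l
  induction l with
  | nil => intro _ a b ha; simp at ha
  | cons c rest ih =>
    intro hl a b ha hb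
    rw [List.pairwise_cons] at hl
    obtain ⟨hcle, hrest⟩ := hl
    match rest, ha, hb with
    | [], ha, hb =>
      simp at ha hb
      subst ha; subst hb
      simp
    | d :: t, ha, hb =>
      have hM0 : 0 ≤ maxSpacing (c :: d :: t) := maxSpacing_nonneg _
      have hMstep : d - c ≤ maxSpacing (c :: d :: t) := by
        rw [maxSpacing_cons_cons]; exact le_max_left _ _
      have hMrest : maxSpacing (d :: t) ≤ maxSpacing (c :: d :: t) := by
        rw [maxSpacing_cons_cons]; exact le_max_right _ _
      have hlen : (0:ℝ) ≤ ((d :: t).length : ℝ) - 1 := by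
        simp
      have hlen2 : ((c :: d :: t).length : ℝ) - 1 = ((d :: t).length : ℝ) := by
        push_cast [List.length_cons]; ring
      set M := maxSpacing (c :: d :: t) with hMdef
      rw [hlen2]
      rcases List.mem_cons.mp hb with rfl | hbr
      · have hac : b ≤ a := by
          rcases List.mem_cons.mp ha with rfl | har
          · exact le_rfl
          · exact hcle a har
        have h1 : b - a ≤ 0 := by linarith
        refine le_trans h1 (mul_nonneg (by positivity) hM0)
      · rcases List.mem_cons.mp ha with rfl | har
        · have hdb : b - d ≤ (((d :: t).length : ℝ) - 1) * maxSpacing (d :: t) :=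
            ih hrest List.mem_cons_self hbr
          have h1 : (((d :: t).length : ℝ) - 1) * maxSpacing (d :: t)
              ≤ (((d :: t).length : ℝ) - 1) * M :=
            mul_le_mul_of_nonneg_left hMrest hlen
          have hsplit : b - a = (b - d) + (d - a) := by ring
          rw [hsplit]
          calc (b - d) + (d - a) ≤ (((d :: t).length : ℝ) - 1) * M + M :=
                add_le_add (le_trans hdb h1) hMstep
            _ = ((d :: t).length : ℝ) * M := by ring
        · have h0 := ih hrest har hbr
          refine le_trans h0 ?_
          calc (((d :: t).length : ℝ) - 1) * maxSpacing (d :: t)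
              ≤ (((d :: t).length : ℝ) - 1) * M :=
                mul_le_mul_of_nonneg_left hMrest hlen
            _ ≤ ((d :: t).length : ℝ) * M := by nlinarith

def GoodEv (n : ℕ) : Set (Fin n → ℝ) :=
  {x | (∃ i, x i ≤ 1/4) ∧ (∃ j, 3/4 ≤ x j) ∧ (∀ i j, i ≠ j → x i ≠ x j) ∧
    (∃ i j, i ≠ j ∧ |x i - x j| ≤ 1/((n:ℝ) * Real.sqrt n))}

lemma det_lemma {n : ℕ} (hn : 3 < n) {x : Fin n → ℝ} (hx : x ∈ GoodEv n) :
    Real.sqrt (n : ℝ) / 2 ≤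
      maxSpacing (((Finset.univ : Finset (Fin n)).image fun i => x i).sort (· ≤ ·))
        / (⨅ p : {p : Fin n × Fin n // p.1 ≠ p.2}, |x p.1.1 - x p.1.2|) := by
  obtain ⟨⟨ia, hia⟩, ⟨jb, hjb⟩, hdist, ⟨i0, j0, hij0, hclose⟩⟩ := hx
  have hn4 : (4:ℝ) ≤ (n:ℝ) := by exact_mod_cast hn
  have hsqrt_pos : 0 < Real.sqrt (n:ℝ) := Real.sqrt_pos.mpr (by linarith)
  set s : ℝ := 1/((n:ℝ) * Real.sqrt n) with hs
  have hs_pos : 0 < s := by positivity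
  set l := ((Finset.univ : Finset (Fin n)).image fun i => x i).sort (· ≤ ·) with hl
  set U := maxSpacing l with hU
  set f : {p : Fin n × Fin n // p.1 ≠ p.2} → ℝ := fun p => |x p.1.1 - x p.1.2| with hf
  have hbdd : BddBelow (Set.range f) := ⟨0, by rintro _ ⟨p, rfl⟩; exact abs_nonneg _⟩
  haveI hne : Nonempty {p : Fin n × Fin n // p.1 ≠ p.2} := ⟨⟨(i0, j0), hij0⟩⟩
  set Λ := ⨅ p : {p : Fin n × Fin n // p.1 ≠ p.2}, f p with hΛ
  have hΛs : Λ ≤ s := le_trans (ciInf_le hbdd ⟨(i0, j0), hij0⟩) hclose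
  have hΛpos : 0 < Λ := by
    obtain ⟨p0, hp0⟩ := Finite.exists_min f
    have : 0 < f p0 := abs_pos.mpr (sub_ne_zero.mpr (hdist _ _ p0.2))
    exact lt_of_lt_of_le this (le_ciInf hp0)
  -- membership of values in the sorted list
  have hmem : ∀ i : Fin n, x i ∈ l := by
    intro i
    rw [hl, Finset.mem_sort]
    exact Finset.mem_image_of_mem _ (Finset.mem_univ i)
  have hsorted : l.Pairwise (· ≤ ·) := Finset.pairwise_sort _ _
  have hlength : (l.length : ℝ) ≤ (n:ℝ) := by
    have : l.length = ((Finset.univ : Finset (Fin n)).image fun i => x i).card :=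
      Finset.length_sort _
    rw [this]
    exact_mod_cast le_trans (Finset.card_image_le) (by simp)
  have hU0 : 0 ≤ U := maxSpacing_nonneg l
  have hrange : (1:ℝ)/2 ≤ ((n:ℝ) - 1) * U := by
    have h1 : x jb - x ia ≤ ((l.length : ℝ) - 1) * U :=
      sub_le_maxSpacing hsorted (hmem ia) (hmem jb)
    have h2 : ((l.length : ℝ) - 1) * U ≤ ((n:ℝ) - 1) * U :=
      mul_le_mul_of_nonneg_right (by linarith) hU0
    linarith
  -- U ≥ 1/(2(n-1)) > 0
  have hUpos : (1:ℝ)/(2*((n:ℝ)-1)) ≤ U := by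
    rw [div_le_iff₀ (by linarith)]
    linarith [hrange]
  have step1 : U / s ≤ U / Λ := div_le_div_of_nonneg_left hU0 hΛpos hΛs
  have step2 : Real.sqrt (n:ℝ) / 2 ≤ U / s := by
    rw [hs, div_div_eq_mul_div, div_one]
    have hmul : (1:ℝ)/(2*((n:ℝ)-1)) * ((n:ℝ) * Real.sqrt n) ≤ U * ((n:ℝ) * Real.sqrt n) :=
      mul_le_mul_of_nonneg_right hUpos (by positivity)
    have hkey : Real.sqrt (n:ℝ) / 2 ≤ (1:ℝ)/(2*((n:ℝ)-1)) * ((n:ℝ) * Real.sqrt n) := by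
      rw [div_le_iff₀ (by norm_num : (0:ℝ) < 2), one_div, inv_mul_eq_div,
        div_mul_eq_mul_div, le_div_iff₀ (by linarith : (0:ℝ) < 2 * ((n:ℝ) - 1))]
      nlinarith [hsqrt_pos]
    linarith
  exact le_trans step2 step1

lemma measurableSet_GoodEv (n : ℕ) : MeasurableSet (GoodEv n) := by
  have h : GoodEv n = (⋃ i, (fun x : Fin n → ℝ => x i) ⁻¹' Iic (1/4)) ∩
      ((⋃ j, (fun x : Fin n → ℝ => x j) ⁻¹' Ici (3/4)) ∩
      ((⋂ i, ⋂ j, ⋂ (_ : i ≠ j), ((fun x : Fin n → ℝ => x i - x j) ⁻¹' {0})ᶜ) ∩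
      (⋃ i, ⋃ j, ⋃ (_ : i ≠ j),
        (fun x : Fin n → ℝ => |x i - x j|) ⁻¹' Iic (1/((n:ℝ) * Real.sqrt n))))) := by
    ext x; simp [GoodEv, sub_eq_zero]
  rw [h]
  refine (MeasurableSet.iUnion fun i => (measurable_pi_apply i) measurableSet_Iic).inter
    ((MeasurableSet.iUnion fun j => (measurable_pi_apply j) measurableSet_Ici).inter
    ((MeasurableSet.iInter fun i => MeasurableSet.iInter fun j => MeasurableSet.iInter fun _ =>
      (((measurable_pi_apply i).sub (measurable_pi_apply j)) (measurableSet_singleton 0)).compl).inter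
    (MeasurableSet.iUnion fun i => MeasurableSet.iUnion fun j => MeasurableSet.iUnion fun _ =>
      (((measurable_pi_apply i).sub (measurable_pi_apply j)).abs) measurableSet_Iic)))

lemma good_compl_bound (n : ℕ) (hn : 3 < n) :
    Measure.pi (fun _ : Fin n => unif) (GoodEv n)ᶜ
      ≤ ENNReal.ofReal (10 / Real.sqrt n) := by
  have hn4 : (4:ℝ) ≤ (n:ℝ) := by exact_mod_cast hn
  have hsqrt_pos : 0 < Real.sqrt (n:ℝ) := Real.sqrt_pos.mpr (by linarith)
  set s : ℝ := 1/((n:ℝ) * Real.sqrt n) with hs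
  have hs_pos : 0 < s := by positivity
  have hs1 : s ≤ 1 := by
    rw [hs, div_le_one (by positivity)]
    nlinarith [Real.sq_sqrt (by linarith : (0:ℝ) ≤ (n:ℝ)), hsqrt_pos]
  set π := Measure.pi (fun _ : Fin n => unif) with hπ
  set A1 : Set (Fin n → ℝ) := Set.pi univ (fun _ => Ioi (1/4:ℝ)) with hA1
  set A2 : Set (Fin n → ℝ) := Set.pi univ (fun _ => Iio (3/4:ℝ)) with hA2
  set Col : Set (Fin n → ℝ) := {x | ∃ i j, i ≠ j ∧ x i = x j} with hCol
  set Out : Set (Fin n → ℝ) := ⋃ i, Function.eval i ⁻¹' (Icc (0:ℝ) 1)ᶜ with hOut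
  have hsub : (GoodEv n)ᶜ ⊆ A1 ∪ (A2 ∪ (Col ∪ (SepEv n s ∪ Out))) := by
    intro x hx
    simp only [GoodEv, Set.mem_compl_iff, Set.mem_setOf_eq, not_and_or] at hx
    rcases hx with h1 | h2 | h3 | h4
    · left
      push_neg at h1
      intro i _
      simpa using h1 i
    · right; left
      push_neg at h2
      intro j _
      simpa using h2 j
    · right; right; left
      push_neg at h3
      obtain ⟨i, j, hij, heq⟩ := h3
      exact ⟨i, j, hij, heq⟩
    · right; right; right
      push_neg at h4
      by_cases hin : ∀ k, x k ∈ Icc (0:ℝ) 1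
      · left; exact ⟨hin, fun i j hij => h4 i j hij⟩
      · right
        push_neg at hin
        obtain ⟨k, hk⟩ := hin
        exact Set.mem_iUnion.mpr ⟨k, hk⟩
  have hA1m : π A1 = ENNReal.ofReal ((3/4:ℝ))^n := by
    rw [hA1, hπ, Measure.pi_pi]
    have : unif (Ioi (1/4:ℝ)) = ENNReal.ofReal (3/4) := by
      rw [unif, Measure.restrict_apply measurableSet_Ioi]
      have : Ioi (1/4:ℝ) ∩ Icc 0 1 = Ioc (1/4:ℝ) 1 := by
        ext z; simp only [Set.mem_inter_iff, Set.mem_Ioi, Set.mem_Icc, Set.mem_Ioc]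
        constructor
        · rintro ⟨h1, _, h3⟩; exact ⟨h1, h3⟩
        · rintro ⟨h1, h2⟩; exact ⟨h1, by linarith, h2⟩
      rw [this, Real.volume_Ioc]
      norm_num
    rw [this, Finset.prod_const]
    simp
  have hA2m : π A2 = ENNReal.ofReal ((3/4:ℝ))^n := by
    rw [hA2, hπ, Measure.pi_pi]
    have : unif (Iio (3/4:ℝ)) = ENNReal.ofReal (3/4) := by
      rw [unif, Measure.restrict_apply measurableSet_Iio]
      have : Iio (3/4:ℝ) ∩ Icc 0 1 = Ico (0:ℝ) (3/4) := by
        ext z; simp only [Set.mem_inter_iff, Set.mem_Iio, Set.mem_Icc, Set.mem_Ico]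
        constructor
        · rintro ⟨h1, h2, _⟩; exact ⟨h2, h1⟩
        · rintro ⟨h1, h2⟩; exact ⟨h2, h1, by linarith⟩
      rw [this, Real.volume_Ico]
      norm_num
    rw [this, Finset.prod_const]
    simp
  have hOutm : π Out = 0 := by
    rw [hOut, hπ]
    refine measure_iUnion_null fun i => Measure.pi_eval_preimage_null (μ := fun _ : Fin n => unif) (i := i) ?_
    rw [show unif = volume.restrict (Set.Icc (0:ℝ) 1) from rfl,
      Measure.restrict_apply measurableSet_Icc.compl, Set.compl_inter_self, measure_empty]
  have hColm : π Col = 0 := col_null n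
  have hSep : π (SepEv n s) ≤ ENNReal.ofReal (Real.exp (-((n:ℝ)-1)/(4*Real.sqrt n))) := by
    refine le_trans (sep_bound n hs_pos hs1) (ENNReal.ofReal_le_ofReal ?_)
    have hsum : ∀ m : ℕ, (∑ k ∈ Finset.range m, (k:ℝ)) = (m:ℝ) * ((m:ℝ)-1) / 2 := by
      intro m
      induction m with
      | zero => simp
      | succ m ihm =>
        rw [Finset.sum_range_succ, ihm]
        push_cast
        ring
    have hn0 : (n:ℝ) ≠ 0 := by linarith
    have heq : -(s/2) * ((n:ℝ) * ((n:ℝ)-1) / 2) = -((n:ℝ)-1)/(4*Real.sqrt n) := by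
      rw [hs]
      field_simp
      ring
    rw [hsum n, heq]
  calc π (GoodEv n)ᶜ ≤ π (A1 ∪ (A2 ∪ (Col ∪ (SepEv n s ∪ Out)))) := measure_mono hsub
    _ ≤ π A1 + (π A2 + (π Col + (π (SepEv n s) + π Out))) := by
        refine le_trans (measure_union_le _ _) ?_
        refine add_le_add_right ?_ _
        refine le_trans (measure_union_le _ _) ?_
        refine add_le_add_right ?_ _
        refine le_trans (measure_union_le _ _) ?_
        refine add_le_add_right ?_ _
        exact measure_union_le _ _
    _ ≤ ENNReal.ofReal ((3/4:ℝ))^n + (ENNReal.ofReal ((3/4:ℝ))^n + (0 +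
          (ENNReal.ofReal (Real.exp (-((n:ℝ)-1)/(4*Real.sqrt n))) + 0))) := by
        rw [hA1m, hA2m, hColm, hOutm]
        exact add_le_add_right (add_le_add_right (add_le_add_right (add_le_add_left hSep 0) 0) _) _
    _ ≤ ENNReal.ofReal (10 / Real.sqrt n) := by
        rw [add_zero, zero_add, ← ENNReal.ofReal_pow (by norm_num), ← ENNReal.ofReal_add
          (by positivity) (Real.exp_pos _).le, ← ENNReal.ofReal_add (by positivity)
          (by positivity)]
        refine ENNReal.ofReal_le_ofReal ?_
        have h34 : (3/4:ℝ)^n ≤ 1 / Real.sqrt n := by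
          have h1 : Real.sqrt (n:ℝ) ≤ 1 + (n:ℝ)/3 := by
            have h0 := Real.sqrt_le_sqrt (show (n:ℝ) ≤ (1 + (n:ℝ)/3)^2 by nlinarith)
            rwa [Real.sqrt_sq (by positivity)] at h0
          have h2 : 1 + (n:ℝ)/3 ≤ (4/3:ℝ)^n := by
            have := one_add_mul_le_pow (by norm_num : (-2:ℝ) ≤ 1/3) n
            calc 1 + (n:ℝ)/3 = 1 + (n:ℝ) * (1/3) := by ring
              _ ≤ (1 + 1/3:ℝ)^n := this
              _ = (4/3:ℝ)^n := by norm_num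
          have h3 : Real.sqrt (n:ℝ) ≤ (4/3:ℝ)^n := le_trans h1 h2
          calc (3/4:ℝ)^n = 1 / (4/3:ℝ)^n := by
                rw [_root_.eq_div_iff (by positivity), ← mul_pow]
                norm_num
            _ ≤ 1 / Real.sqrt n := one_div_le_one_div_of_le hsqrt_pos h3
        have hexp : Real.exp (-((n:ℝ)-1)/(4*Real.sqrt n)) ≤ 8 / Real.sqrt n := by
          set u : ℝ := ((n:ℝ)-1)/(4*Real.sqrt n) with hu
          have hupos : 0 < u := by
            rw [hu]; exact div_pos (by linarith) (by positivity)
          have h1 : Real.exp (-u) ≤ 1/u := by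
            rw [Real.exp_neg, ← one_div]
            refine one_div_le_one_div_of_le hupos ?_
            linarith [Real.add_one_le_exp u]
          have h2 : 1/u ≤ 8 / Real.sqrt n := by
            rw [hu, one_div_div, div_le_div_iff₀ (by linarith : (0:ℝ) < (n:ℝ)-1) hsqrt_pos]
            nlinarith [Real.mul_self_sqrt (by linarith : (0:ℝ) ≤ (n:ℝ))]
          calc Real.exp (-((n:ℝ)-1)/(4*Real.sqrt n)) = Real.exp (-u) := by rw [hu, neg_div]
            _ ≤ 8 / Real.sqrt n := le_trans h1 h2
        have : (10:ℝ)/Real.sqrt n = 1/Real.sqrt n + (1/Real.sqrt n + 8/Real.sqrt n) := by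
          ring
        rw [this]
        exact add_le_add h34 (add_le_add h34 hexp)

lemma map_joint_eq_pi {Ω : Type} [MeasurableSpace Ω] (μ : Measure Ω) [IsProbabilityMeasure μ]
    {n : ℕ} (X : Fin n → Ω → ℝ) (hX : ∀ i, Measurable (X i))
    (hind : iIndepFun X μ)
    (hunif : ∀ i, Measure.map (X i) μ = unif) :
    Measure.map (fun ω i => X i ω) μ = Measure.pi (fun _ => unif) := by
  refine (Measure.pi_eq ?_).symm
  intro s hs
  rw [Measure.map_apply (measurable_pi_lambda _ hX) (MeasurableSet.univ_pi hs)]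
  have h : (fun ω i => X i ω) ⁻¹' (Set.pi univ s) = ⋂ i ∈ Finset.univ, X i ⁻¹' s i := by
    ext ω; simp [Set.mem_pi]
  rw [h, hind.measure_inter_preimage_eq_mul Finset.univ (fun i _ => hs i)]
  exact Finset.prod_congr rfl fun i _ => by rw [← hunif i, Measure.map_apply (hX i) (hs i)]

/-- **The density factor of a uniform sample is at least `√n / 2` with probability
`1 − O(n^{−1/2})`.** There is a universal constant `C > 0` such that for every `n > 3`
and i.i.d. `X 1, …, X n` uniform on `[0, 1]`, writing `U` for the maximum spacing
between consecutive order statistics and `L = min_{i ≠ j} |X i − X j|` for the minimum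
spacing, we have `P(U/L ≥ √n / 2) ≥ 1 − C·n^{−1/2}`. -/
theorem density_factor_uniform_sample_large :
    ∃ C : ℝ, 0 < C ∧
      ∀ (n : ℕ), 3 < n →
      ∀ (Ω : Type) (_ : MeasurableSpace Ω) (μ : Measure Ω), IsProbabilityMeasure μ →
      ∀ (X : Fin n → Ω → ℝ), (∀ i, Measurable (X i)) →
      iIndepFun X μ →
      (∀ i, Measure.map (X i) μ = volume.restrict (Set.Icc (0 : ℝ) 1)) →
      ENNReal.ofReal (1 - C * (n : ℝ) ^ (-(1 / 2 : ℝ))) ≤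
        μ {ω | Real.sqrt (n : ℝ) / 2 ≤
          maxSpacing (((Finset.univ : Finset (Fin n)).image fun i => X i ω).sort (· ≤ ·))
            / (⨅ p : {p : Fin n × Fin n // p.1 ≠ p.2}, |X p.1.1 ω - X p.1.2 ω|)} := by
  refine ⟨10, by norm_num, ?_⟩
  intro n hn Ω mΩ μ hμ X hX hind hunif
  have hsqrt_pos : 0 < Real.sqrt (n:ℝ) := Real.sqrt_pos.mpr (by exact_mod_cast Nat.pos_of_ne_zero (by omega))
  set Y : Ω → Fin n → ℝ := fun ω i => X i ω with hY
  have hYmeas : Measurable Y := measurable_pi_lambda _ hX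
  have hmap : Measure.map Y μ = Measure.pi (fun _ : Fin n => unif) :=
    map_joint_eq_pi μ X hX hind hunif
  have hsubset : Y ⁻¹' (GoodEv n) ⊆
      {ω | Real.sqrt (n : ℝ) / 2 ≤
        maxSpacing (((Finset.univ : Finset (Fin n)).image fun i => X i ω).sort (· ≤ ·))
          / (⨅ p : {p : Fin n × Fin n // p.1 ≠ p.2}, |X p.1.1 ω - X p.1.2 ω|)} := by
    intro ω hω
    have := det_lemma hn (x := Y ω) hω
    simpa [hY] using this
  haveI : IsProbabilityMeasure (Measure.pi (fun _ : Fin n => unif)) := by infer_instance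
  have hgood : Measure.pi (fun _ : Fin n => unif) (GoodEv n)
      = 1 - Measure.pi (fun _ : Fin n => unif) (GoodEv n)ᶜ := by
    have h := measure_add_measure_compl (μ := Measure.pi (fun _ : Fin n => unif))
      (measurableSet_GoodEv n)
    rw [measure_univ] at h
    exact ENNReal.eq_sub_of_add_eq (measure_ne_top _ _) h
  calc ENNReal.ofReal (1 - 10 * (n : ℝ) ^ (-(1 / 2 : ℝ)))
      = ENNReal.ofReal (1 - 10 / Real.sqrt n) := by
        congr 1
        rw [Real.rpow_neg (Nat.cast_nonneg n), ← Real.sqrt_eq_rpow]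
        ring
    _ ≤ 1 - ENNReal.ofReal (10 / Real.sqrt n) := by
        rw [ENNReal.ofReal_sub _ (by positivity), ENNReal.ofReal_one]
    _ ≤ 1 - Measure.pi (fun _ : Fin n => unif) (GoodEv n)ᶜ :=
        tsub_le_tsub_left (good_compl_bound n hn) 1
    _ = Measure.pi (fun _ : Fin n => unif) (GoodEv n) := hgood.symm
    _ = μ (Y ⁻¹' (GoodEv n)) := by
        rw [← hmap, Measure.map_apply hYmeas (measurableSet_GoodEv n)]
    _ ≤ _ := measure_mono hsubset
end
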